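/- arXiv:1906.09462 — 12 statements merged into one kernel-verified Lean document; each statement's English description precedes it below -/
import Mathlib

section
/- Given real numbers ū_{i−1}, ū_i, ū_{i+1}, v̄_i, there exists a unique real polynomial p of degree at most 3 whose cell average over I_{i+j} equals ū_{i+j} for j = −1, 0, 1 and whose first-order moment over I_i equals v̄_i; moreover p(x) = ū_i + 12 v̄_i ξ + (1/2)(ū_{i−1} − 2ū_i + ū_{i+1})(ξ² − 1/12) − (5/11)(ū_{i−1} + 24 v̄_i − ū_{i+1})(ξ³ − (3/20)ξ), where ξ = (x − x_i)/Δx. -/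
open MeasureTheory Polynomial

/-- Cell average of a polynomial over the cell of width `Δx` centered at `xc`. -/
noncomputable def cellAvg (xc Δx : ℝ) (p : Polynomial ℝ) : ℝ :=
  (1 / Δx) * ∫ x in (xc - Δx / 2)..(xc + Δx / 2), p.eval x

/-- First-order moment of a polynomial over the cell of width `Δx` centered at `xc`. -/
noncomputable def cellMoment (xc Δx : ℝ) (p : Polynomial ℝ) : ℝ :=
  (1 / Δx) * ∫ x in (xc - Δx / 2)..(xc + Δx / 2), p.eval x * ((x - xc) / Δx)

lemma eval3 (p : Polynomial ℝ) (hp : p.degree ≤ 3) (x : ℝ) :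
    p.eval x = p.coeff 0 + p.coeff 1 * x + p.coeff 2 * x ^ 2 + p.coeff 3 * x ^ 3 := by
  have h : p.natDegree < 4 :=
    lt_of_le_of_lt (Polynomial.natDegree_le_iff_degree_le.mpr hp) (by norm_num)
  rw [Polynomial.eval_eq_sum_range' h]
  simp [Finset.sum_range_succ]

lemma I3 (c0 c1 c2 c3 a b : ℝ) :
    (∫ x in a..b, (c0 + c1*x + c2*x^2 + c3*x^3)) =
      c0*(b-a) + c1*(b^2-a^2)/2 + c2*(b^3-a^3)/3 + c3*(b^4-a^4)/4 := by
  have h : ∀ x ∈ Set.uIcc a b,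
      HasDerivAt (fun y : ℝ => c0*y + c1*y^2/2 + c2*y^3/3 + c3*y^4/4)
        (c0 + c1*x + c2*x^2 + c3*x^3) x := by
    intro x _
    have h1 := ((((hasDerivAt_id' (x := x)).const_mul c0).add
      (((hasDerivAt_pow 2 x).const_mul c1).div_const 2)).add
      (((hasDerivAt_pow 3 x).const_mul c2).div_const 3)).add
      (((hasDerivAt_pow 4 x).const_mul c3).div_const 4)
    refine h1.congr_deriv ?_
    push_cast
    ring
  rw [intervalIntegral.integral_eq_sub_of_hasDerivAt h
    (Continuous.intervalIntegrable (by continuity) a b)]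
  ring

lemma I4 (c0 c1 c2 c3 c4 a b : ℝ) :
    (∫ x in a..b, (c0 + c1*x + c2*x^2 + c3*x^3 + c4*x^4)) =
      c0*(b-a) + c1*(b^2-a^2)/2 + c2*(b^3-a^3)/3 + c3*(b^4-a^4)/4 + c4*(b^5-a^5)/5 := by
  have h : ∀ x ∈ Set.uIcc a b,
      HasDerivAt (fun y : ℝ => c0*y + c1*y^2/2 + c2*y^3/3 + c3*y^4/4 + c4*y^5/5)
        (c0 + c1*x + c2*x^2 + c3*x^3 + c4*x^4) x := by
    intro x _
    have h1 := (((((hasDerivAt_id' (x := x)).const_mul c0).add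
      (((hasDerivAt_pow 2 x).const_mul c1).div_const 2)).add
      (((hasDerivAt_pow 3 x).const_mul c2).div_const 3)).add
      (((hasDerivAt_pow 4 x).const_mul c3).div_const 4)).add
      (((hasDerivAt_pow 5 x).const_mul c4).div_const 5)
    refine h1.congr_deriv ?_
    push_cast
    ring
  rw [intervalIntegral.integral_eq_sub_of_hasDerivAt h
    (Continuous.intervalIntegrable (by continuity) a b)]
  ring

lemma avg_eq (c d : ℝ) (hd : d ≠ 0) (p : Polynomial ℝ) (hp : p.degree ≤ 3) :
    cellAvg c d p = p.coeff 0 + p.coeff 1 * c + p.coeff 2 * (c^2 + d^2/12)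
      + p.coeff 3 * (c^3 + c*d^2/4) := by
  unfold cellAvg
  simp only [eval3 p hp]
  rw [I3]
  field_simp
  ring

lemma mom_eq (c d : ℝ) (hd : d ≠ 0) (p : Polynomial ℝ) (hp : p.degree ≤ 3) :
    cellMoment c d p = (p.coeff 1 + 2*p.coeff 2*c + 3*p.coeff 3*c^2)*d/12
      + p.coeff 3*d^3/80 := by
  unfold cellMoment
  have hfun : (fun x => p.eval x * ((x - c)/d)) =
      fun x => (-(c*p.coeff 0)/d) + ((p.coeff 0 - c*p.coeff 1)/d)*x
        + ((p.coeff 1 - c*p.coeff 2)/d)*x^2 + ((p.coeff 2 - c*p.coeff 3)/d)*x^3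
        + (p.coeff 3/d)*x^4 := by
    funext x
    rw [eval3 p hp]
    field_simp
    ring
  rw [hfun, I4]
  field_simp
  ring

set_option maxHeartbeats 1000000 in
theorem stmt0 (xi Δx : ℝ) (hΔx : 0 < Δx) (ubm ub ubp vb : ℝ) :
    (∃! p : Polynomial ℝ, p.degree ≤ 3 ∧
      cellAvg (xi - Δx) Δx p = ubm ∧ cellAvg xi Δx p = ub ∧ cellAvg (xi + Δx) Δx p = ubp ∧
      cellMoment xi Δx p = vb) ∧
    (∀ p : Polynomial ℝ, p.degree ≤ 3 →
      cellAvg (xi - Δx) Δx p = ubm → cellAvg xi Δx p = ub → cellAvg (xi + Δx) Δx p = ubp →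
      cellMoment xi Δx p = vb →
      ∀ x : ℝ, p.eval x =
        ub + 12 * vb * ((x - xi) / Δx)
          + (1 / 2) * (ubm - 2 * ub + ubp) * (((x - xi) / Δx) ^ 2 - 1 / 12)
          - (5 / 11) * (ubm + 24 * vb - ubp)
              * (((x - xi) / Δx) ^ 3 - (3 / 20) * ((x - xi) / Δx))) := by
  have hd : Δx ≠ 0 := ne_of_gt hΔx
  have key : ∀ p : Polynomial ℝ, p.degree ≤ 3 →
      cellAvg (xi - Δx) Δx p = ubm → cellAvg xi Δx p = ub → cellAvg (xi + Δx) Δx p = ubp →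
      cellMoment xi Δx p = vb →
      ∀ x : ℝ, p.eval x =
        ub + 12 * vb * ((x - xi) / Δx)
          + (1 / 2) * (ubm - 2 * ub + ubp) * (((x - xi) / Δx) ^ 2 - 1 / 12)
          - (5 / 11) * (ubm + 24 * vb - ubp)
              * (((x - xi) / Δx) ^ 3 - (3 / 20) * ((x - xi) / Δx)) := by
    intro p hp h1 h2 h3 h4 x
    rw [avg_eq _ _ hd p hp] at h1 h2 h3
    rw [mom_eq _ _ hd p hp] at h4
    rw [eval3 p hp, ← h1, ← h2, ← h3, ← h4]
    field_simp
    ring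
  refine ⟨?_, key⟩
  -- the explicit polynomial
  set c0 : ℝ := ub - (ubm - 2*ub + ubp)/24 with hc0def
  set c1 : ℝ := 12*vb + (3/44)*(ubm + 24*vb - ubp) with hc1def
  set c2 : ℝ := (ubm - 2*ub + ubp)/2 with hc2def
  set c3 : ℝ := -(5/11)*(ubm + 24*vb - ubp) with hc3def
  set a3 : ℝ := c3/Δx^3 with ha3def
  set a2 : ℝ := c2/Δx^2 - 3*c3*xi/Δx^3 with ha2def
  set a1 : ℝ := c1/Δx - 2*c2*xi/Δx^2 + 3*c3*xi^2/Δx^3 with ha1def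
  set a0 : ℝ := c0 - c1*xi/Δx + c2*xi^2/Δx^2 - c3*xi^3/Δx^3 with ha0def
  set P : Polynomial ℝ := C a0 + C a1 * X + C a2 * X^2 + C a3 * X^3 with hPdef
  have hP3 : P.degree ≤ 3 := by
    rw [hPdef]
    compute_degree
  have e0 : P.coeff 0 = a0 := by simp [hPdef, coeff_X_pow]
  have e1 : P.coeff 1 = a1 := by simp [hPdef, coeff_X_pow]
  have e2 : P.coeff 2 = a2 := by simp [hPdef, coeff_X_pow]
  have e3 : P.coeff 3 = a3 := by simp [hPdef, coeff_X_pow]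
  have hA : cellAvg (xi - Δx) Δx P = ubm := by
    rw [avg_eq _ _ hd P hP3, e0, e1, e2, e3, ha0def, ha1def, ha2def, ha3def,
      hc0def, hc1def, hc2def, hc3def]
    field_simp
    ring
  have hB : cellAvg xi Δx P = ub := by
    rw [avg_eq _ _ hd P hP3, e0, e1, e2, e3, ha0def, ha1def, ha2def, ha3def,
      hc0def, hc1def, hc2def, hc3def]
    field_simp
    ring
  have hC : cellAvg (xi + Δx) Δx P = ubp := by
    rw [avg_eq _ _ hd P hP3, e0, e1, e2, e3, ha0def, ha1def, ha2def, ha3def,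
      hc0def, hc1def, hc2def, hc3def]
    field_simp
    ring
  have hD : cellMoment xi Δx P = vb := by
    rw [mom_eq _ _ hd P hP3, e1, e2, e3, ha1def, ha2def, ha3def,
      hc1def, hc2def, hc3def]
    field_simp
    ring
  refine ⟨P, ⟨hP3, hA, hB, hC, hD⟩, ?_⟩
  rintro q ⟨hq, g1, g2, g3, g4⟩
  apply Polynomial.funext
  intro x
  rw [key q hq g1 g2 g3 g4 x, ← key P hP3 hA hB hC hD x]
end

section
/- Given real numbers ū_{i−1}, ū_i, v̄_{i−1}, there exists a unique real polynomial p₁ of degree at most 2 whose cell averages over I_{i−1} and I_i equal ū_{i−1} and ū_i respectively, and whose first-order moment over I_{i−1} equals v̄_{i−1}; moreover the first-order moment of p₁ over I_i equals (1/6)ū_i − (1/6)ū_{i−1} − v̄_{i−1}. -/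
open MeasureTheory Polynomial

lemma cubic_integral (u v d0 d1 d2 d3 : ℝ) :
    ∫ x in u..v, (d0 + d1*x + d2*x^2 + d3*x^3) =
      d0*(v-u) + d1*(v^2-u^2)/2 + d2*(v^3-u^3)/3 + d3*(v^4-u^4)/4 := by
  rw [intervalIntegral.integral_add, intervalIntegral.integral_add,
    intervalIntegral.integral_add, intervalIntegral.integral_const,
    intervalIntegral.integral_const_mul, intervalIntegral.integral_const_mul,
    intervalIntegral.integral_const_mul, integral_id, integral_pow, integral_pow]
  · simp only [smul_eq_mul]; push_cast; ring
  all_goals exact Continuous.intervalIntegrable (by continuity) _ _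

lemma avg_formula (xc Δx a b c : ℝ) (h : Δx ≠ 0) :
    cellAvg xc Δx (C a + C b * X + C c * X^2) = a + b*xc + c*(xc^2 + Δx^2/12) := by
  unfold cellAvg
  have he : Set.EqOn (fun x => eval x (C a + C b * X + C c * X^2))
      (fun x => a + b*x + c*x^2 + 0*x^3) (Set.uIcc (xc - Δx/2) (xc + Δx/2)) := by
    intro x _
    simp only [eval_add, eval_mul, eval_C, eval_X, eval_pow]
    ring
  rw [intervalIntegral.integral_congr he, cubic_integral]
  field_simp
  ring

lemma mom_formula (xc Δx a b c : ℝ) (h : Δx ≠ 0) :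
    cellMoment xc Δx (C a + C b * X + C c * X^2) = (b + 2*c*xc) * Δx / 12 := by
  unfold cellMoment
  have he : Set.EqOn (fun x => eval x (C a + C b * X + C c * X^2) * ((x - xc)/Δx))
      (fun x => (-(a*xc)/Δx) + ((a - b*xc)/Δx)*x + ((b - c*xc)/Δx)*x^2 + (c/Δx)*x^3)
      (Set.uIcc (xc - Δx/2) (xc + Δx/2)) := by
    intro x _
    simp only [eval_add, eval_mul, eval_C, eval_X, eval_pow]
    field_simp
    ring
  rw [intervalIntegral.integral_congr he, cubic_integral]
  field_simp
  ring

lemma rep_deg2 (p : Polynomial ℝ) (hp : p.degree ≤ 2) :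
    p = C (p.coeff 0) + C (p.coeff 1) * X + C (p.coeff 2) * X^2 := by
  have h3 : p.natDegree < 3 := by
    have h := Polynomial.natDegree_le_iff_degree_le.mpr (by exact_mod_cast hp : p.degree ≤ (2:ℕ))
    omega
  conv_lhs => rw [p.as_sum_range' 3 h3]
  simp [Finset.sum_range_succ, ← Polynomial.C_mul_X_pow_eq_monomial]

theorem stmt1 (xi Δx : ℝ) (hΔx : 0 < Δx) (ubm ub vbm : ℝ) :
    (∃! p : Polynomial ℝ, p.degree ≤ 2 ∧
      cellAvg (xi - Δx) Δx p = ubm ∧ cellAvg xi Δx p = ub ∧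
      cellMoment (xi - Δx) Δx p = vbm) ∧
    (∀ p : Polynomial ℝ, p.degree ≤ 2 →
      cellAvg (xi - Δx) Δx p = ubm → cellAvg xi Δx p = ub →
      cellMoment (xi - Δx) Δx p = vbm →
      cellMoment xi Δx p = (1 / 6) * ub - (1 / 6) * ubm - vbm) := by
  have hne : Δx ≠ 0 := ne_of_gt hΔx
  -- explicit solution coefficients as atoms with multiplied-through defining equations
  obtain ⟨c, hc⟩ : ∃ c : ℝ, c = (ub - ubm - 12*vbm)/Δx^2 := ⟨_, rfl⟩
  obtain ⟨b, hb⟩ : ∃ b : ℝ, b = 12*vbm/Δx - 2*c*(xi - Δx) := ⟨_, rfl⟩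
  obtain ⟨a, ha⟩ : ∃ a : ℝ, a = ubm - b*(xi-Δx) - c*((xi-Δx)^2 + Δx^2/12) := ⟨_, rfl⟩
  have hc' : c * Δx^2 = ub - ubm - 12*vbm := by rw [hc]; field_simp
  have hb' : b * Δx = 12*vbm - 2*c*(xi - Δx)*Δx := by rw [hb]; field_simp
  set p₀ : Polynomial ℝ := C a + C b * X + C c * X^2 with hp₀
  have hdeg : p₀.degree ≤ 2 := by
    rw [hp₀]
    calc (C a + C b * X + C c * X^2).degree
        ≤ max (max (C a).degree (C b * X).degree) (C c * X^2).degree :=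
          le_trans (Polynomial.degree_add_le _ _)
            (max_le_max (Polynomial.degree_add_le _ _) le_rfl)
      _ ≤ 2 := by
          apply max_le (max_le _ _)
          · exact le_trans (Polynomial.degree_mul_le _ _)
              (le_trans (add_le_add Polynomial.degree_C_le (Polynomial.degree_X_pow_le 2))
                (by norm_num))
          · exact le_trans Polynomial.degree_C_le (by norm_num)
          · exact le_trans (Polynomial.degree_mul_le _ _)
              (le_trans (add_le_add Polynomial.degree_C_le Polynomial.degree_X_le)
                (by norm_num))
  have h1 : cellAvg (xi - Δx) Δx p₀ = ubm := by
    rw [hp₀, avg_formula _ _ _ _ _ hne]; linear_combination ha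
  have h2 : cellAvg xi Δx p₀ = ub := by
    rw [hp₀, avg_formula _ _ _ _ _ hne]; linear_combination ha + hb' + hc'
  have h3 : cellMoment (xi - Δx) Δx p₀ = vbm := by
    rw [hp₀, mom_formula _ _ _ _ _ hne]; linear_combination (1/12) * hb'
  have key : ∀ p : Polynomial ℝ, p.degree ≤ 2 →
      cellAvg (xi - Δx) Δx p = ubm → cellAvg xi Δx p = ub →
      cellMoment (xi - Δx) Δx p = vbm → p = p₀ := by
    intro p hpd e1 e2 e3
    have hrep := rep_deg2 p hpd
    set a' := p.coeff 0
    set b' := p.coeff 1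
    set c' := p.coeff 2
    rw [hrep, avg_formula _ _ _ _ _ hne] at e1 e2
    rw [hrep, mom_formula _ _ _ _ _ hne] at e3
    have hcc : c' = c := by
      have h0 : (c' - c) * Δx^2 = 0 := by linear_combination e2 - e1 - 12*e3 - hc'
      have := mul_eq_zero.mp h0
      rcases this with h | h
      · linarith [sub_eq_zero.mp h]
      · exact absurd h (pow_ne_zero 2 hne)
    have hbb : b' = b := by
      have h0 : (b' - b) * Δx = 0 := by
        linear_combination 12*e3 - hb' - 2*(xi-Δx)*Δx*hcc
      rcases mul_eq_zero.mp h0 with h | h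
      · linarith [sub_eq_zero.mp h]
      · exact absurd h hne
    have haa : a' = a := by
      linear_combination e1 - ha - (xi-Δx)*hbb - ((xi-Δx)^2 + Δx^2/12)*hcc
    rw [hrep, hp₀, haa, hbb, hcc]
  refine ⟨⟨p₀, ⟨hdeg, h1, h2, h3⟩, fun q hq => key q hq.1 hq.2.1 hq.2.2.1 hq.2.2.2⟩, ?_⟩
  intro p hpd e1 e2 e3
  have hrep := rep_deg2 p hpd
  rw [hrep, avg_formula _ _ _ _ _ hne] at e1 e2
  rw [hrep, mom_formula _ _ _ _ _ hne] at e3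
  rw [hrep, mom_formula _ _ _ _ _ hne]
  linear_combination (1/6)*e2 - (1/6)*e1 - e3
end

section
/- Given real numbers ū_{i−1}, ū_i, ū_{i+1}, there exists a unique real polynomial p₂ of degree at most 2 whose cell averages over I_{i−1}, I_i, I_{i+1} equal ū_{i−1}, ū_i, ū_{i+1} respectively; moreover the first-order moment of p₂ over I_i equals (1/24)ū_{i+1} − (1/24)ū_{i−1}. -/
open MeasureTheory Polynomial

lemma key_integral (a b c d lo hi : ℝ) :
    ∫ x in lo..hi, (a + b*x + c*x^2 + d*x^3) =
      (a*hi + b/2*hi^2 + c/3*hi^3 + d/4*hi^4) - (a*lo + b/2*lo^2 + c/3*lo^3 + d/4*lo^4) := by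
  have H : ∀ x : ℝ, HasDerivAt (fun y : ℝ => a*y + b/2*y^2 + c/3*y^3 + d/4*y^4)
      (a + b*x + c*x^2 + d*x^3) x := by
    intro x
    have h1 : HasDerivAt (fun y : ℝ => a*y) a x := by
      simpa using (hasDerivAt_id x).const_mul a
    have h2 : HasDerivAt (fun y : ℝ => b/2*y^2) (b*x) x := by
      have := (hasDerivAt_pow 2 x).const_mul (b/2)
      norm_num at this
      exact this.congr_deriv (by ring)
    have h3 : HasDerivAt (fun y : ℝ => c/3*y^3) (c*x^2) x := by
      have := (hasDerivAt_pow 3 x).const_mul (c/3)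
      norm_num at this
      exact this.congr_deriv (by ring)
    have h4 : HasDerivAt (fun y : ℝ => d/4*y^4) (d*x^3) x := by
      have := (hasDerivAt_pow 4 x).const_mul (d/4)
      norm_num at this
      exact this.congr_deriv (by ring)
    exact ((h1.add h2).add h3).add h4
  rw [intervalIntegral.integral_eq_sub_of_hasDerivAt (fun x _ => H x)]
  exact (Continuous.intervalIntegrable (by continuity) _ _)

lemma eval_deg2 (p : Polynomial ℝ) (hp : p.degree ≤ 2) (x : ℝ) :
    p.eval x = p.coeff 0 + p.coeff 1 * x + p.coeff 2 * x^2 := by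
  have hn : p.natDegree < 3 :=
    Nat.lt_succ_of_le (Polynomial.natDegree_le_iff_degree_le.mpr hp)
  rw [Polynomial.eval_eq_sum_range' hn]
  simp [Finset.sum_range_succ]

lemma cellAvg_eq (xc h : ℝ) (hh : h ≠ 0) (p : Polynomial ℝ) (hp : p.degree ≤ 2) :
    cellAvg xc h p = p.coeff 0 + p.coeff 1 * xc + p.coeff 2 * (xc^2 + h^2/12) := by
  unfold cellAvg
  rw [intervalIntegral.integral_congr (g := fun x =>
      p.coeff 0 + p.coeff 1 * x + p.coeff 2 * x^2 + 0 * x^3)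
      (fun x _ => by rw [eval_deg2 p hp x]; ring), key_integral]
  field_simp
  ring

lemma cellMoment_eq (xc h : ℝ) (hh : h ≠ 0) (p : Polynomial ℝ) (hp : p.degree ≤ 2) :
    cellMoment xc h p = (p.coeff 1 + 2 * p.coeff 2 * xc) * h / 12 := by
  unfold cellMoment
  rw [intervalIntegral.integral_congr (g := fun x =>
      (-(p.coeff 0 * xc)/h) + ((p.coeff 0 - p.coeff 1 * xc)/h) * x
        + ((p.coeff 1 - p.coeff 2 * xc)/h) * x^2 + (p.coeff 2 / h) * x^3)
      (fun x _ => by rw [eval_deg2 p hp x]; field_simp; ring), key_integral]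
  field_simp
  ring

lemma solve_coeffs (xi h : ℝ) (hh : h ≠ 0) (A0 A1 A2 u1 u2 u3 : ℝ)
    (e1 : A0 + A1*(xi - h) + A2*((xi - h)^2 + h^2/12) = u1)
    (e2 : A0 + A1*xi + A2*(xi^2 + h^2/12) = u2)
    (e3 : A0 + A1*(xi + h) + A2*((xi + h)^2 + h^2/12) = u3) :
    A2 = (u1 - 2*u2 + u3)/(2*h^2) ∧
    A1 = ((u3 - u1)*h - 2*(u1 - 2*u2 + u3)*xi)/(2*h^2) ∧
    A0 = u2 - A1*xi - A2*(xi^2 + h^2/12) := by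
  have hA2 : A2 = (u1 - 2*u2 + u3)/(2*h^2) := by
    field_simp
    linear_combination e1 - 2*e2 + e3
  have hA1 : A1 = ((u3 - u1)*h - 2*(u1 - 2*u2 + u3)*xi)/(2*h^2) := by
    rw [eq_div_iff (mul_ne_zero two_ne_zero (pow_ne_zero _ hh))]
    linear_combination h*e3 - h*e1 - 2*xi*(e1 - 2*e2 + e3)
  exact ⟨hA2, hA1, by linarith [e2]⟩

theorem stmt2 (xi Δx : ℝ) (hΔx : 0 < Δx) (ubm ub ubp : ℝ) :
    (∃! p : Polynomial ℝ, p.degree ≤ 2 ∧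
      cellAvg (xi - Δx) Δx p = ubm ∧ cellAvg xi Δx p = ub ∧ cellAvg (xi + Δx) Δx p = ubp) ∧
    (∀ p : Polynomial ℝ, p.degree ≤ 2 →
      cellAvg (xi - Δx) Δx p = ubm → cellAvg xi Δx p = ub → cellAvg (xi + Δx) Δx p = ubp →
      cellMoment xi Δx p = (1 / 24) * ubp - (1 / 24) * ubm) := by
  have hne : Δx ≠ 0 := ne_of_gt hΔx
  set c : ℝ := (ubm - 2*ub + ubp)/(2*Δx^2) with hc
  set b : ℝ := (ubp - ubm)/(2*Δx) - (ubm - 2*ub + ubp)/Δx^2 * xi with hb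
  set a : ℝ := ub - b*xi - c*(xi^2 + Δx^2/12) with ha
  set P : Polynomial ℝ := C c * X^2 + C b * X + C a with hP
  have hdeg : P.degree ≤ 2 := Polynomial.degree_quadratic_le
  have hc0 : P.coeff 0 = a := by simp [hP]
  have hc1 : P.coeff 1 = b := by simp [hP, Polynomial.coeff_C]
  have hc2 : P.coeff 2 = c := by simp [hP, Polynomial.coeff_C]
  constructor
  · refine ⟨P, ⟨hdeg, ?_, ?_, ?_⟩, ?_⟩
    · rw [cellAvg_eq _ _ hne _ hdeg, hc0, hc1, hc2, ha, hb, hc]; field_simp; ring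
    · rw [cellAvg_eq _ _ hne _ hdeg, hc0, hc1, hc2, ha]; ring
    · rw [cellAvg_eq _ _ hne _ hdeg, hc0, hc1, hc2, ha, hb, hc]; field_simp; ring
    · rintro q ⟨hqdeg, f1, f2, f3⟩
      rw [cellAvg_eq _ _ hne _ hqdeg] at f1 f2 f3
      obtain ⟨g2, g1, g0⟩ := solve_coeffs xi Δx hne _ _ _ _ _ _ f1 f2 f3
      apply Polynomial.ext
      intro n
      match n with
      | 0 => rw [hc0, g0, g1, g2, ha, hb, hc]; field_simp
      | 1 => rw [hc1, g1, hb]; field_simp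
      | 2 => rw [hc2, g2, hc]
      | (m+3) =>
        have h1 : q.coeff (m+3) = 0 := Polynomial.coeff_eq_zero_of_degree_lt
          (lt_of_le_of_lt hqdeg (by exact_mod_cast by omega))
        have h2 : P.coeff (m+3) = 0 := Polynomial.coeff_eq_zero_of_degree_lt
          (lt_of_le_of_lt hdeg (by exact_mod_cast by omega))
        rw [h1, h2]
  · intro q hqdeg f1 f2 f3
    rw [cellAvg_eq _ _ hne _ hqdeg] at f1 f2 f3
    obtain ⟨g2, g1, g0⟩ := solve_coeffs xi Δx hne _ _ _ _ _ _ f1 f2 f3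
    rw [cellMoment_eq _ _ hne _ hqdeg, g1, g2]
    field_simp
    ring
end

section
/- Let ū_{i−1}, ū_i, ū_{i+1}, v̄_{i−1}, v̄_{i+1} be arbitrary real numbers. Let p₁ be the unique quadratic polynomial matching the cell averages ū_{i−1}, ū_i over I_{i−1}, I_i and the first-order moment v̄_{i−1} over I_{i−1}; let p₂ be the unique quadratic polynomial matching the cell averages ū_{i−1}, ū_i, ū_{i+1} over I_{i−1}, I_i, I_{i+1}; let p₃ be the unique quadratic polynomial matching the cell averages ū_i, ū_{i+1} over I_i, I_{i+1} and the first-order moment v̄_{i+1} over I_{i+1}; and let p₀ be the unique quartic polynomial matching the cell averages ū_{i−1}, ū_i, ū_{i+1} over I_{i−1}, I_i, I_{i+1} and the first-order moments v̄_{i−1}, v̄_{i+1} over I_{i−1}, I_{i+1}. Then the first-order moment of p₀ over I_i equals (11/38) times the first-order moment of p₁ over I_i plus (8/19) times the first-order moment of p₂ over I_i plus (11/38) times the first-order moment of p₃ over I_i. -/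
open MeasureTheory Polynomial

set_option maxHeartbeats 1000000

lemma key_avg (xc dx : ℝ) (p : Polynomial ℝ) (h5 : p.natDegree < 5) (hdx : dx ≠ 0) :
    dx * cellAvg xc dx p =
      ∑ k ∈ Finset.range 5, p.coeff k *
        (((xc + dx / 2) ^ (k + 1) - (xc - dx / 2) ^ (k + 1)) / ((k : ℝ) + 1)) := by
  have h2 : (∫ x in (xc - dx / 2)..(xc + dx / 2), p.eval x) =
      ∑ k ∈ Finset.range 5, p.coeff k *
        (((xc + dx / 2) ^ (k + 1) - (xc - dx / 2) ^ (k + 1)) / ((k : ℝ) + 1)) := by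
    have h1 : ∀ x : ℝ, p.eval x = ∑ k ∈ Finset.range 5, p.coeff k * x ^ k := by
      intro x; exact p.eval_eq_sum_range' h5 x
    simp_rw [h1]
    rw [intervalIntegral.integral_finset_sum]
    · refine Finset.sum_congr rfl fun k _ => ?_
      rw [intervalIntegral.integral_const_mul, integral_pow]
    · intro k _
      exact (continuous_const.mul (continuous_pow k)).intervalIntegrable _ _
  unfold cellAvg
  rw [h2, ← mul_assoc, mul_one_div, div_self hdx, one_mul]

lemma key_moment (xc dx : ℝ) (p : Polynomial ℝ) (h5 : p.natDegree < 5) (hdx : dx ≠ 0) :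
    dx ^ 2 * cellMoment xc dx p =
      ∑ k ∈ Finset.range 5, p.coeff k *
        (((xc + dx / 2) ^ (k + 2) - (xc - dx / 2) ^ (k + 2)) / ((k : ℝ) + 2)
          - xc * (((xc + dx / 2) ^ (k + 1) - (xc - dx / 2) ^ (k + 1)) / ((k : ℝ) + 1))) := by
  have h1 : ∀ x : ℝ, p.eval x * ((x - xc) / dx) =
      (1 / dx) * ∑ k ∈ Finset.range 5, p.coeff k * (x ^ (k + 1) - xc * x ^ k) := by
    intro x
    rw [p.eval_eq_sum_range' h5 x, Finset.mul_sum, Finset.sum_mul]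
    exact Finset.sum_congr rfl fun k _ => by ring
  have h2 : (∫ x in (xc - dx / 2)..(xc + dx / 2), p.eval x * ((x - xc) / dx)) =
      (1 / dx) * ∑ k ∈ Finset.range 5, p.coeff k *
        (((xc + dx / 2) ^ (k + 2) - (xc - dx / 2) ^ (k + 2)) / ((k : ℝ) + 2)
          - xc * (((xc + dx / 2) ^ (k + 1) - (xc - dx / 2) ^ (k + 1)) / ((k : ℝ) + 1))) := by
    simp_rw [h1]
    rw [intervalIntegral.integral_const_mul]
    congr 1
    rw [intervalIntegral.integral_finset_sum]
    · refine Finset.sum_congr rfl fun k _ => ?_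
      rw [intervalIntegral.integral_const_mul]
      rw [intervalIntegral.integral_sub
          ((continuous_pow (k + 1)).intervalIntegrable _ _)
          ((show Continuous fun x : ℝ => xc * x ^ k from
            continuous_const.mul (continuous_pow k)).intervalIntegrable _ _)]
      rw [intervalIntegral.integral_const_mul]
      rw [integral_pow, integral_pow]
      push_cast
      try ring
    · intro k _
      exact (continuous_const.mul ((continuous_pow (k + 1)).sub
        (continuous_const.mul (continuous_pow k)))).intervalIntegrable _ _
  unfold cellMoment
  rw [h2, ← mul_assoc, ← mul_assoc]
  have hh : dx ^ 2 * (1 / dx) * (1 / dx) = 1 := by field_simp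
  rw [hh, one_mul]

theorem stmt5 (xi Δx : ℝ) (hΔx : 0 < Δx) (ubm ub ubp vbm vbp : ℝ)
    (p1 p2 p3 p0 : Polynomial ℝ)
    (hp1 : p1.degree ≤ 2 ∧ cellAvg (xi - Δx) Δx p1 = ubm ∧ cellAvg xi Δx p1 = ub ∧
      cellMoment (xi - Δx) Δx p1 = vbm)
    (hp2 : p2.degree ≤ 2 ∧ cellAvg (xi - Δx) Δx p2 = ubm ∧ cellAvg xi Δx p2 = ub ∧
      cellAvg (xi + Δx) Δx p2 = ubp)
    (hp3 : p3.degree ≤ 2 ∧ cellAvg xi Δx p3 = ub ∧ cellAvg (xi + Δx) Δx p3 = ubp ∧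
      cellMoment (xi + Δx) Δx p3 = vbp)
    (hp0 : p0.degree ≤ 4 ∧ cellAvg (xi - Δx) Δx p0 = ubm ∧ cellAvg xi Δx p0 = ub ∧
      cellAvg (xi + Δx) Δx p0 = ubp ∧ cellMoment (xi - Δx) Δx p0 = vbm ∧
      cellMoment (xi + Δx) Δx p0 = vbp) :
    cellMoment xi Δx p0 =
      (11 / 38) * cellMoment xi Δx p1 + (8 / 19) * cellMoment xi Δx p2
        + (11 / 38) * cellMoment xi Δx p3 := by
  obtain ⟨hd1, h1a, h1b, h1c⟩ := hp1
  obtain ⟨hd2, h2a, h2b, h2c⟩ := hp2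
  obtain ⟨hd3, h3a, h3b, h3c⟩ := hp3
  obtain ⟨hd0, h0a, h0b, h0c, h0d, h0e⟩ := hp0
  have hne : Δx ≠ 0 := hΔx.ne'
  have m0 : p0.natDegree ≤ 4 := natDegree_le_iff_degree_le.mpr (by exact_mod_cast hd0)
  have m1 : p1.natDegree ≤ 2 := natDegree_le_iff_degree_le.mpr (by exact_mod_cast hd1)
  have m2 : p2.natDegree ≤ 2 := natDegree_le_iff_degree_le.mpr (by exact_mod_cast hd2)
  have m3 : p3.natDegree ≤ 2 := natDegree_le_iff_degree_le.mpr (by exact_mod_cast hd3)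
  have n0 : p0.natDegree < 5 := by omega
  have n1 : p1.natDegree < 5 := by omega
  have n2 : p2.natDegree < 5 := by omega
  have n3 : p3.natDegree < 5 := by omega
  have c13 : p1.coeff 3 = 0 := coeff_eq_zero_of_natDegree_lt (by omega)
  have c14 : p1.coeff 4 = 0 := coeff_eq_zero_of_natDegree_lt (by omega)
  have c23 : p2.coeff 3 = 0 := coeff_eq_zero_of_natDegree_lt (by omega)
  have c24 : p2.coeff 4 = 0 := coeff_eq_zero_of_natDegree_lt (by omega)
  have c33 : p3.coeff 3 = 0 := coeff_eq_zero_of_natDegree_lt (by omega)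
  have c34 : p3.coeff 4 = 0 := coeff_eq_zero_of_natDegree_lt (by omega)
  have A0m := key_avg (xi - Δx) Δx p0 n0 hne; rw [h0a] at A0m
  have A0p := key_avg (xi + Δx) Δx p0 n0 hne; rw [h0c] at A0p
  have Mm0m := key_moment (xi - Δx) Δx p0 n0 hne; rw [h0d] at Mm0m
  have Mm0p := key_moment (xi + Δx) Δx p0 n0 hne; rw [h0e] at Mm0p
  have A1m := key_avg (xi - Δx) Δx p1 n1 hne; rw [h1a] at A1m
  have A1c := key_avg xi Δx p1 n1 hne; rw [h1b] at A1c
  have Mm1m := key_moment (xi - Δx) Δx p1 n1 hne; rw [h1c] at Mm1m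
  have A2m := key_avg (xi - Δx) Δx p2 n2 hne; rw [h2a] at A2m
  have A2p := key_avg (xi + Δx) Δx p2 n2 hne; rw [h2c] at A2p
  have A3c := key_avg xi Δx p3 n3 hne; rw [h3a] at A3c
  have A3p := key_avg (xi + Δx) Δx p3 n3 hne; rw [h3b] at A3p
  have Mm3p := key_moment (xi + Δx) Δx p3 n3 hne; rw [h3c] at Mm3p
  have M0c := key_moment xi Δx p0 n0 hne
  have M1c := key_moment xi Δx p1 n1 hne
  have M2c := key_moment xi Δx p2 n2 hne
  have M3c := key_moment xi Δx p3 n3 hne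
  simp only [Finset.sum_range_succ, Finset.sum_range_zero, Nat.cast_zero, Nat.cast_one,
    Nat.cast_ofNat, c13, c14, c23, c24, c33, c34, zero_mul, add_zero, zero_add,
    pow_one] at A0m A0p Mm0m Mm0p A1m A1c Mm1m A2m A2p A3c A3p Mm3p M0c M1c M2c M3c
  refine mul_left_cancel₀ (pow_ne_zero 2 hne) ?_
  linear_combination M0c - (11/38) * M1c - (8/19) * M2c - (11/38) * M3c
    + (5/76) * Δx * A0m - (5/76) * Δx * A0p + (11/38) * Mm0m + (11/38) * Mm0p
    + (11/38) * ((-1/6) * Δx * A1m + (1/6) * Δx * A1c + (-1) * Mm1m)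
    + (8/19) * ((-1/24) * Δx * A2m + (1/24) * Δx * A2p)
    + (11/38) * ((-1/6) * Δx * A3c + (1/6) * Δx * A3p + (-1) * Mm3p)
end

section
/- Let p₁ be the unique quadratic polynomial whose cell averages over I_{i−1} and I_i equal ū_{i−1} and ū_i and whose first-order moment over I_{i−1} equals v̄_{i−1}. Then its smoothness indicator over I_i, namely Σ_{α=1}^{2} Δx^{2α−1} ∫_{I_i} (p₁^{(α)}(x))² dx, equals 4(ū_{i−1} − ū_i + 6 v̄_{i−1})² + (13/3)(ū_{i−1} − ū_i + 12 v̄_{i−1})². -/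
open MeasureTheory Polynomial

/-- Smoothness indicator `∑_{α=1}^{r} Δx^(2α-1) ∫_{I} (p^{(α)}(x))^2 dx` over the cell
of width `Δx` centered at `xc`. -/
noncomputable def smoothInd (xc Δx : ℝ) (r : ℕ) (p : Polynomial ℝ) : ℝ :=
  ∑ α ∈ Finset.Icc 1 r,
    Δx ^ (2 * α - 1) *
      ∫ x in (xc - Δx / 2)..(xc + Δx / 2), ((⇑Polynomial.derivative)^[α] p).eval x ^ 2

lemma int_cubic (A B C D u v : ℝ) :
    (∫ x in u..v, (A + B*x + C*x^2 + D*x^3)) =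
      (A*v + B*v^2/2 + C*v^3/3 + D*v^4/4) - (A*u + B*u^2/2 + C*u^3/3 + D*u^4/4) := by
  have h : ∀ x ∈ Set.uIcc u v,
      HasDerivAt (fun x : ℝ => A*x + B*x^2/2 + C*x^3/3 + D*x^4/4)
        (A + B*x + C*x^2 + D*x^3) x := by
    intro x _
    have h1 : HasDerivAt (fun x : ℝ => A*x) (A*1) x := (hasDerivAt_id x).const_mul A
    have h2 : HasDerivAt (fun x : ℝ => B*x^2/2) (B*(2*x^(2-1))/2) x :=
      ((hasDerivAt_pow 2 x).const_mul B).div_const 2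
    have h3 : HasDerivAt (fun x : ℝ => C*x^3/3) (C*(3*x^(3-1))/3) x :=
      ((hasDerivAt_pow 3 x).const_mul C).div_const 3
    have h4 : HasDerivAt (fun x : ℝ => D*x^4/4) (D*(4*x^(4-1))/4) x :=
      ((hasDerivAt_pow 4 x).const_mul D).div_const 4
    have := ((h1.add h2).add h3).add h4
    exact this.congr_deriv (by push_cast; ring)
  have hint : IntervalIntegrable (fun x : ℝ => A + B*x + C*x^2 + D*x^3) volume u v := by
    apply Continuous.intervalIntegrable
    continuity
  rw [intervalIntegral.integral_eq_sub_of_hasDerivAt h hint]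

theorem stmt6 (xi Δx : ℝ) (hΔx : 0 < Δx) (ubm ub vbm : ℝ)
    (p1 : Polynomial ℝ) (hdeg : p1.degree ≤ 2)
    (havgm : cellAvg (xi - Δx) Δx p1 = ubm) (havg : cellAvg xi Δx p1 = ub)
    (hmom : cellMoment (xi - Δx) Δx p1 = vbm) :
    smoothInd xi Δx 2 p1 =
      4 * (ubm - ub + 6 * vbm) ^ 2 + (13 / 3) * (ubm - ub + 12 * vbm) ^ 2 := by
  have hne : Δx ≠ 0 := ne_of_gt hΔx
  set a := p1.coeff 0 with ha
  set b := p1.coeff 1 with hb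
  set c := p1.coeff 2 with hc
  have hnd : p1.natDegree ≤ 2 := natDegree_le_iff_degree_le.mpr hdeg
  have hp : p1 = Polynomial.C a + Polynomial.C b * X + Polynomial.C c * X ^ 2 := by
    apply Polynomial.ext
    intro n
    match n with
    | 0 => simp [ha]
    | 1 => simp [hb]
    | 2 => simp [coeff_X, coeff_C, hc]
    | (n+3) =>
      rw [Polynomial.coeff_eq_zero_of_natDegree_lt (by omega)]
      simp [coeff_X, coeff_C]
  -- generic integral computations
  have heval : ∀ x : ℝ, p1.eval x = a + b*x + c*x^2 := by
    intro x; rw [hp]; simp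
  have hd1 : (⇑Polynomial.derivative)^[1] p1 = Polynomial.C b + Polynomial.C (2*c) * X := by
    rw [hp]; simp [derivative_X_pow]; rw [C_ofNat]; ring
  have hd2 : (⇑Polynomial.derivative)^[2] p1 = Polynomial.C (2*c) := by
    rw [Function.iterate_succ_apply', hd1]; simp
  -- compute cellAvg over a general center
  have hAvg : ∀ xc : ℝ, cellAvg xc Δx p1 = a + b*xc + c*(xc^2 + Δx^2/12) := by
    intro xc
    unfold cellAvg
    have : (∫ x in (xc - Δx / 2)..(xc + Δx / 2), p1.eval x)
        = ∫ x in (xc - Δx / 2)..(xc + Δx / 2), (a + b*x + c*x^2 + 0*x^3) := by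
      apply intervalIntegral.integral_congr
      intro x _; simp only [heval]; ring
    rw [this, int_cubic]
    field_simp
    ring
  have hMom : cellMoment (xi - Δx) Δx p1 = Δx * (b + 2*c*(xi - Δx)) / 12 := by
    unfold cellMoment
    set xc := xi - Δx with hxc
    have : (∫ x in (xc - Δx / 2)..(xc + Δx / 2), p1.eval x * ((x - xc) / Δx))
        = ∫ x in (xc - Δx / 2)..(xc + Δx / 2),
            ((-(a*xc)/Δx) + ((a - b*xc)/Δx)*x + ((b - c*xc)/Δx)*x^2 + (c/Δx)*x^3) := by
      apply intervalIntegral.integral_congr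
      intro x _; simp only [heval]; field_simp; ring
    rw [this, int_cubic]
    field_simp
    ring
  have hSI : smoothInd xi Δx 2 p1 = Δx^2*(b + 2*c*xi)^2 + (13/3)*c^2*Δx^4 := by
    unfold smoothInd
    rw [show Finset.Icc 1 2 = ({1, 2} : Finset ℕ) by decide]
    rw [Finset.sum_insert (by decide), Finset.sum_singleton]
    have e1 : (∫ x in (xi - Δx / 2)..(xi + Δx / 2), ((⇑Polynomial.derivative)^[1] p1).eval x ^ 2)
        = ∫ x in (xi - Δx / 2)..(xi + Δx / 2), (b^2 + (4*b*c)*x + (4*c^2)*x^2 + 0*x^3) := by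
      apply intervalIntegral.integral_congr
      intro x _; simp only [hd1]; simp; ring
    have e2 : (∫ x in (xi - Δx / 2)..(xi + Δx / 2), ((⇑Polynomial.derivative)^[2] p1).eval x ^ 2)
        = ∫ x in (xi - Δx / 2)..(xi + Δx / 2), ((4*c^2) + 0*x + 0*x^2 + 0*x^3) := by
      apply intervalIntegral.integral_congr
      intro x _; simp only [hd2]; simp; ring
    rw [e1, e2, int_cubic, int_cubic]
    norm_num
    ring
  rw [hSI, ← havgm, ← havg, ← hmom, hAvg, hAvg, hMom]
  field_simp
  ring
end

section
/- Let p₂ be the unique quadratic polynomial whose cell averages over I_{i−1}, I_i, I_{i+1} equal ū_{i−1}, ū_i, ū_{i+1} respectively. Then its smoothness indicator over I_i, namely Σ_{α=1}^{2} Δx^{2α−1} ∫_{I_i} (p₂^{(α)}(x))² dx, equals (1/4)(ū_{i−1} − ū_{i+1})² + (13/12)(ū_{i−1} − 2ū_i + ū_{i+1})². -/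
open MeasureTheory Polynomial intervalIntegral

lemma integ_quad (A B C a b : ℝ) :
    ∫ x in a..b, (A + B * x + C * x ^ 2) =
      A * (b - a) + B * (b ^ 2 - a ^ 2) / 2 + C * (b ^ 3 - a ^ 3) / 3 := by
  have h1 : IntervalIntegrable (fun x : ℝ => A + B * x) volume a b :=
    (Continuous.intervalIntegrable (by continuity) a b)
  have h2 : IntervalIntegrable (fun x : ℝ => C * x ^ 2) volume a b :=
    (Continuous.intervalIntegrable (by continuity) a b)
  have h3 : IntervalIntegrable (fun _ : ℝ => A) volume a b := intervalIntegrable_const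
  have h4 : IntervalIntegrable (fun x : ℝ => B * x) volume a b :=
    (Continuous.intervalIntegrable (by continuity) a b)
  rw [intervalIntegral.integral_add h1 h2, intervalIntegral.integral_add h3 h4,
    intervalIntegral.integral_const, intervalIntegral.integral_const_mul,
    intervalIntegral.integral_const_mul, integral_id, integral_pow]
  simp only [smul_eq_mul]
  push_cast
  ring

theorem stmt7 (xi Δx : ℝ) (hΔx : 0 < Δx) (ubm ub ubp : ℝ)
    (p2 : Polynomial ℝ) (hdeg : p2.degree ≤ 2)
    (havgm : cellAvg (xi - Δx) Δx p2 = ubm) (havg : cellAvg xi Δx p2 = ub)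
    (havgp : cellAvg (xi + Δx) Δx p2 = ubp) :
    smoothInd xi Δx 2 p2 =
      (1 / 4) * (ubm - ubp) ^ 2 + (13 / 12) * (ubm - 2 * ub + ubp) ^ 2 := by
  obtain ⟨a, b, c, hp⟩ : ∃ a b c, p2 = C a + C b * X + C c * X ^ 2 := by
    refine ⟨p2.coeff 0, p2.coeff 1, p2.coeff 2, ?_⟩
    ext n
    match n with
    | 0 => simp
    | 1 => simp
    | 2 => simp [coeff_X_pow]
    | (n+3) =>
      rw [Polynomial.coeff_eq_zero_of_degree_lt
        (lt_of_le_of_lt hdeg (by exact_mod_cast by norm_num))]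
      simp [coeff_X_pow, Polynomial.coeff_X]
  have hd1 : derivative (C a + C b * X + C c * X ^ 2) = C b + C (2 * c) * X := by
    simp [derivative_X_pow]
    rw [show (C 2 : ℝ[X]) = 2 from map_ofNat C 2]
    ring
  have hd2 : derivative (C b + C (2 * c) * X) = C (2 * c) := by simp
  subst hp
  simp only [cellAvg, eval_add, eval_mul, eval_C, eval_X, eval_pow] at havgm havg havgp
  rw [integ_quad] at havgm havg havgp
  rw [smoothInd, show Finset.Icc 1 2 = ({1, 2} : Finset ℕ) from rfl,
    Finset.sum_pair (by norm_num : (1:ℕ) ≠ 2)]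
  simp only [Function.iterate_succ, Function.iterate_zero, Function.comp_apply, id_eq,
    Function.iterate_one, hd1, hd2, eval_add, eval_mul, eval_C, eval_X]
  rw [show (fun x => (b + 2 * c * x) ^ 2) =
      fun x => b ^ 2 + (4 * b * c) * x + (4 * c ^ 2) * x ^ 2 from funext fun x => by ring,
    show (fun x : ℝ => (2 * c) ^ 2) =
      fun x : ℝ => (2 * c) ^ 2 + 0 * x + 0 * x ^ 2 from funext fun x => by ring,
    integ_quad, integ_quad]
  subst havgm havg havgp
  have hne : Δx ≠ 0 := ne_of_gt hΔx
  field_simp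
  ring
end

section
/- Given real numbers ū_{i−1}, ū_i, ū_{i+1}, v̄_i, there exists a unique real polynomial q₂ of degree at most 3 whose cell averages over I_{i−1}, I_i, I_{i+1} equal ū_{i−1}, ū_i, ū_{i+1} respectively and whose first-order moment over I_i equals v̄_i; moreover q₂(x_i + Δx/2) = (2/33)ū_{i−1} + (5/6)ū_i + (7/66)ū_{i+1} + (60/11)v̄_i. -/
open MeasureTheory Polynomial

private lemma int4 (a b c0 c1 c2 c3 c4 : ℝ) :
    ∫ x in a..b, (c0 + c1*x + c2*x^2 + c3*x^3 + c4*x^4)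
      = c0*(b-a) + c1*(b^2-a^2)/2 + c2*(b^3-a^3)/3 + c3*(b^4-a^4)/4 + c4*(b^5-a^5)/5 := by
  have I : ∀ (d : ℝ) (n : ℕ), IntervalIntegrable (fun x : ℝ => d * x^n) volume a b :=
    fun d n => (continuous_const.mul (continuous_pow n)).intervalIntegrable _ _
  have e : (fun x : ℝ => c0 + c1*x + c2*x^2 + c3*x^3 + c4*x^4)
      = fun x : ℝ => c0*x^0 + (c1*x^1 + (c2*x^2 + (c3*x^3 + c4*x^4))) := by
    funext x; ring
  rw [e, intervalIntegral.integral_add (I c0 0) (((I c1 1).add ((I c2 2).add ((I c3 3).add (I c4 4)))))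
    , intervalIntegral.integral_add (I c1 1) ((I c2 2).add ((I c3 3).add (I c4 4)))
    , intervalIntegral.integral_add (I c2 2) ((I c3 3).add (I c4 4))
    , intervalIntegral.integral_add (I c3 3) (I c4 4)]
  simp only [intervalIntegral.integral_const_mul, integral_pow]
  push_cast
  ring

private lemma subst1 (xi Δx : ℝ) (hΔ : Δx ≠ 0) (g : ℝ → ℝ) (a b : ℝ) :
    ∫ x in a..b, g ((x - xi)/Δx) = Δx * ∫ t in (a - xi)/Δx..(b - xi)/Δx, g t := by
  rw [intervalIntegral.integral_comp_sub_right (fun y => g (y/Δx)) xi,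
    intervalIntegral.integral_comp_div (fun y => g y) hΔ]
  simp [smul_eq_mul]

private lemma evalr (q : Polynomial ℝ) (hq : q.natDegree ≤ 3) (x : ℝ) :
    q.eval x = q.coeff 0 + q.coeff 1 * x + q.coeff 2 * x^2 + q.coeff 3 * x^3 := by
  rw [Polynomial.eval_eq_sum_range' (lt_of_le_of_lt hq (by norm_num : (3:ℕ) < 4))]
  simp [Finset.sum_range_succ]

private lemma comp_lin_natDeg (q : Polynomial ℝ) (hq : q.natDegree ≤ 3) (u v : ℝ) (hu : u ≠ 0) :
    (q.comp (C u * X + C v)).natDegree ≤ 3 := by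
  rw [Polynomial.natDegree_comp]
  have : (C u * X + C v).natDegree = 1 := Polynomial.natDegree_linear (b := v) hu
  simp [this, hq]

private lemma lin_comp_lin (u v u' v' : ℝ) :
    (C u * X + C v).comp (C u' * X + C v') = C (u*u') * X + C (u*v' + v) := by
  simp [Polynomial.add_comp, Polynomial.mul_comp, Polynomial.C_comp, Polynomial.X_comp,
    Polynomial.C_mul, Polynomial.C_add]
  ring

private lemma comp_inv (xi Δx : ℝ) (hΔ : Δx ≠ 0) (p : Polynomial ℝ) :
    (p.comp (C Δx⁻¹ * X + C (-(xi/Δx)))).comp (C Δx * X + C xi) = p := by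
  rw [Polynomial.comp_assoc, lin_comp_lin]
  have h1 : Δx⁻¹ * Δx = 1 := inv_mul_cancel₀ hΔ
  have h2 : Δx⁻¹ * xi + -(xi/Δx) = 0 := by field_simp; ring
  rw [h1, h2]
  simp

/-- key formulas -/
private lemma avg_formula_s9 (xi Δx : ℝ) (hΔ : Δx ≠ 0) (q : Polynomial ℝ)
    (hq : q.natDegree ≤ 3) (j : ℝ) :
    cellAvg (xi + j*Δx) Δx q =
      (q.comp (C Δx * X + C xi)).coeff 0 + (q.comp (C Δx * X + C xi)).coeff 1 * j +
      (q.comp (C Δx * X + C xi)).coeff 2 * (j^2 + 1/12) +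
      (q.comp (C Δx * X + C xi)).coeff 3 * (j^3 + j/4) := by
  set r := q.comp (C Δx * X + C xi) with hr
  have hrd : r.natDegree ≤ 3 := comp_lin_natDeg q hq Δx xi hΔ
  have he : ∀ x : ℝ, q.eval x = r.eval ((x - xi)/Δx) := by
    intro x
    rw [hr, Polynomial.eval_comp]
    congr 1
    simp
    field_simp
    ring
  unfold cellAvg
  rw [intervalIntegral.integral_congr (g := fun x => r.eval ((x - xi)/Δx)) (fun x _ => he x),
    subst1 xi Δx hΔ (fun t => r.eval t)]
  have hA : (xi + j*Δx - Δx/2 - xi)/Δx = j - 1/2 := by field_simp; ring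
  have hB : (xi + j*Δx + Δx/2 - xi)/Δx = j + 1/2 := by field_simp; ring
  rw [hA, hB]
  have he2 : (fun t : ℝ => r.eval t)
      = fun t : ℝ => r.coeff 0 + r.coeff 1 * t + r.coeff 2 * t^2 + r.coeff 3 * t^3 + 0*t^4 := by
    funext t; rw [evalr r hrd]; ring
  rw [he2, int4]
  field_simp
  ring

private lemma moment_formula (xi Δx : ℝ) (hΔ : Δx ≠ 0) (q : Polynomial ℝ)
    (hq : q.natDegree ≤ 3) :
    cellMoment xi Δx q =
      (q.comp (C Δx * X + C xi)).coeff 1 * (1/12) +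
      (q.comp (C Δx * X + C xi)).coeff 3 * (1/80) := by
  set r := q.comp (C Δx * X + C xi) with hr
  have hrd : r.natDegree ≤ 3 := comp_lin_natDeg q hq Δx xi hΔ
  have he : ∀ x : ℝ, q.eval x * ((x - xi)/Δx)
      = (fun t => r.eval t * t) ((x - xi)/Δx) := by
    intro x
    simp only
    congr 1
    rw [hr, Polynomial.eval_comp]
    congr 1
    simp
    field_simp
    ring
  unfold cellMoment
  rw [intervalIntegral.integral_congr (g := fun x => (fun t => r.eval t * t) ((x - xi)/Δx))
      (fun x _ => he x),
    subst1 xi Δx hΔ (fun t => r.eval t * t)]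
  have hA : (xi - Δx/2 - xi)/Δx = 0 - 1/2 := by field_simp; ring
  have hB : (xi + Δx/2 - xi)/Δx = 0 + 1/2 := by field_simp; ring
  rw [hA, hB]
  have he2 : (fun t : ℝ => r.eval t * t)
      = fun t : ℝ => 0 + r.coeff 0 * t + r.coeff 1 * t^2 + r.coeff 2 * t^3 + r.coeff 3 * t^4 := by
    funext t; rw [evalr r hrd]; ring
  rw [he2, int4]
  field_simp
  ring

private lemma comp_inv' (xi Δx : ℝ) (hΔ : Δx ≠ 0) (p : Polynomial ℝ) :
    (p.comp (C Δx * X + C xi)).comp (C Δx⁻¹ * X + C (-(xi/Δx))) = p := by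
  rw [Polynomial.comp_assoc, lin_comp_lin]
  have h1 : Δx * Δx⁻¹ = 1 := mul_inv_cancel₀ hΔ
  have h2 : Δx * -(xi/Δx) + xi = 0 := by field_simp; ring
  rw [h1, h2]
  simp

theorem stmt9 (xi Δx : ℝ) (hΔx : 0 < Δx) (ubm ub ubp vb : ℝ) :
    (∃! q : Polynomial ℝ, q.degree ≤ 3 ∧
      cellAvg (xi - Δx) Δx q = ubm ∧ cellAvg xi Δx q = ub ∧ cellAvg (xi + Δx) Δx q = ubp ∧
      cellMoment xi Δx q = vb) ∧
    (∀ q : Polynomial ℝ, q.degree ≤ 3 →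
      cellAvg (xi - Δx) Δx q = ubm → cellAvg xi Δx q = ub → cellAvg (xi + Δx) Δx q = ubp →
      cellMoment xi Δx q = vb →
      q.eval (xi + Δx / 2) =
        (2 / 33) * ubm + (5 / 6) * ub + (7 / 66) * ubp + (60 / 11) * vb) := by
  have hΔ : Δx ≠ 0 := ne_of_gt hΔx
  set b0 : ℝ := (26*ub - ubm - ubp)/24 with hb0
  set b1 : ℝ := (150/11)*vb - (3/44)*(ubp - ubm) with hb1
  set b2 : ℝ := (ubm + ubp - 2*ub)/2 with hb2
  set b3 : ℝ := (5/11)*(ubp - ubm) - (120/11)*vb with hb3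
  set r0 : Polynomial ℝ := C b0 + C b1 * X + C b2 * X^2 + C b3 * X^3 with hr0
  set Q : Polynomial ℝ := r0.comp (C Δx⁻¹ * X + C (-(xi/Δx))) with hQ
  have hr0c0 : r0.coeff 0 = b0 := by simp [hr0, Polynomial.coeff_add]
  have hr0c1 : r0.coeff 1 = b1 := by simp [hr0, Polynomial.coeff_add]
  have hr0c2 : r0.coeff 2 = b2 := by simp [hr0, Polynomial.coeff_add]
  have hr0c3 : r0.coeff 3 = b3 := by simp [hr0, Polynomial.coeff_add]
  have hr0nd : r0.natDegree ≤ 3 := by rw [hr0]; compute_degree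
  have hQnd : Q.natDegree ≤ 3 := comp_lin_natDeg r0 hr0nd Δx⁻¹ _ (inv_ne_zero hΔ)
  have hQdeg : Q.degree ≤ 3 := le_trans Polynomial.degree_le_natDegree (by exact_mod_cast hQnd)
  have hQcomp : Q.comp (C Δx * X + C xi) = r0 := comp_inv xi Δx hΔ r0
  -- avg conditions for an arbitrary q
  have cells : ∀ q : Polynomial ℝ, q.natDegree ≤ 3 →
      cellAvg (xi - Δx) Δx q = (q.comp (C Δx * X + C xi)).coeff 0
        - (q.comp (C Δx * X + C xi)).coeff 1 + (q.comp (C Δx * X + C xi)).coeff 2 * (13/12)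
        - (q.comp (C Δx * X + C xi)).coeff 3 * (5/4) ∧
      cellAvg xi Δx q = (q.comp (C Δx * X + C xi)).coeff 0
        + (q.comp (C Δx * X + C xi)).coeff 2 * (1/12) ∧
      cellAvg (xi + Δx) Δx q = (q.comp (C Δx * X + C xi)).coeff 0
        + (q.comp (C Δx * X + C xi)).coeff 1 + (q.comp (C Δx * X + C xi)).coeff 2 * (13/12)
        + (q.comp (C Δx * X + C xi)).coeff 3 * (5/4) := by
    intro q hq
    refine ⟨?_, ?_, ?_⟩
    · have h := avg_formula_s9 xi Δx hΔ q hq (-1)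
      rw [show xi + (-1)*Δx = xi - Δx by ring] at h
      rw [h]; ring
    · have h := avg_formula_s9 xi Δx hΔ q hq 0
      rw [show xi + (0:ℝ)*Δx = xi by ring] at h
      rw [h]; ring
    · have h := avg_formula_s9 xi Δx hΔ q hq 1
      rw [show xi + (1:ℝ)*Δx = xi + Δx by ring] at h
      rw [h]; ring
  -- Q satisfies the conditions
  have hQ1 : cellAvg (xi - Δx) Δx Q = ubm := by
    rw [(cells Q hQnd).1, hQcomp, hr0c0, hr0c1, hr0c2, hr0c3, hb0, hb1, hb2, hb3]; ring
  have hQ2 : cellAvg xi Δx Q = ub := by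
    rw [(cells Q hQnd).2.1, hQcomp, hr0c0, hr0c2, hb0, hb2]; ring
  have hQ3 : cellAvg (xi + Δx) Δx Q = ubp := by
    rw [(cells Q hQnd).2.2, hQcomp, hr0c0, hr0c1, hr0c2, hr0c3, hb0, hb1, hb2, hb3]; ring
  have hQ4 : cellMoment xi Δx Q = vb := by
    rw [moment_formula xi Δx hΔ Q hQnd, hQcomp, hr0c1, hr0c3, hb1, hb3]; ring
  -- any q satisfying the conditions equals Q
  have main : ∀ q : Polynomial ℝ, q.degree ≤ 3 →
      cellAvg (xi - Δx) Δx q = ubm → cellAvg xi Δx q = ub → cellAvg (xi + Δx) Δx q = ubp →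
      cellMoment xi Δx q = vb → q = Q := by
    intro q hqd h1 h2 h3 h4
    have hqnd : q.natDegree ≤ 3 := Polynomial.natDegree_le_iff_degree_le.mpr hqd
    set r : Polynomial ℝ := q.comp (C Δx * X + C xi) with hr
    have hrnd : r.natDegree ≤ 3 := comp_lin_natDeg q hqnd Δx xi hΔ
    obtain ⟨e1, e2, e3⟩ := cells q hqnd
    rw [h1] at e1; rw [h2] at e2; rw [h3] at e3
    have e4 := moment_formula xi Δx hΔ q hqnd
    rw [h4] at e4
    rw [← hr] at e1 e2 e3 e4
    have hreq : r = r0 := by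
      apply Polynomial.ext
      intro n
      by_cases hn : n ≤ 3
      · interval_cases n
        · rw [hr0c0, hb0]; linarith
        · rw [hr0c1, hb1]; linarith
        · rw [hr0c2, hb2]; linarith
        · rw [hr0c3, hb3]; linarith
      · push_neg at hn
        rw [Polynomial.coeff_eq_zero_of_natDegree_lt (lt_of_le_of_lt hrnd hn),
          Polynomial.coeff_eq_zero_of_natDegree_lt (lt_of_le_of_lt hr0nd hn)]
    calc q = r.comp (C Δx⁻¹ * X + C (-(xi/Δx))) := (comp_inv' xi Δx hΔ q).symm
      _ = Q := by rw [hreq]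
  refine ⟨⟨Q, ⟨hQdeg, hQ1, hQ2, hQ3, hQ4⟩, fun q hq => main q hq.1 hq.2.1 hq.2.2.1 hq.2.2.2.1 hq.2.2.2.2⟩, ?_⟩
  intro q hqd h1 h2 h3 h4
  rw [main q hqd h1 h2 h3 h4]
  have : Q.eval (xi + Δx/2) = r0.eval (Δx⁻¹ * (xi + Δx/2) + -(xi/Δx)) := by
    rw [hQ, Polynomial.eval_comp]; simp
  rw [this, show Δx⁻¹ * (xi + Δx/2) + -(xi/Δx) = 1/2 by field_simp; ring]
  rw [hr0]
  simp only [Polynomial.eval_add, Polynomial.eval_mul, Polynomial.eval_C, Polynomial.eval_pow,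
    Polynomial.eval_X]
  rw [hb0, hb1, hb2, hb3]
  ring
end

section
/- Given real numbers ū_i, ū_{i+1}, v̄_i, v̄_{i+1}, there exists a unique real polynomial q₃ of degree at most 3 whose cell averages over I_i and I_{i+1} equal ū_i and ū_{i+1} and whose first-order moments over I_i and I_{i+1} equal v̄_i and v̄_{i+1}; moreover q₃(x_i + Δx/2) = (1/2)ū_i + (1/2)ū_{i+1} + 2v̄_i − 2v̄_{i+1}. -/
open MeasureTheory Polynomial

/-! In the local coordinate `t = (x - (xᵢ + Δx/2)) / Δx` the cells `Iᵢ`, `Iᵢ₊₁` become the unit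
cells centred at `∓1/2`, and cell averages and moments are unchanged by this affine substitution.
For `a + b t + c t² + d t³` the four data are
`ūᵢ = a - b/2 + c/3 - d/4`, `ūᵢ₊₁ = a + b/2 + c/3 + d/4`,
`v̄ᵢ = b/12 - c/12 + 3d/40`, `v̄ᵢ₊₁ = b/12 + c/12 + 3d/40`,
an invertible system free of `Δx`. Its solution is `localCubic`, and the value at the interface
`t = 0` is the constant coefficient `a = (ūᵢ + ūᵢ₊₁)/2 + 2(v̄ᵢ - v̄ᵢ₊₁)`. -/

theorem integral_eval_eq_sum {p : ℝ[X]} {n : ℕ} (hn : p.natDegree < n) (a b : ℝ) :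
    ∫ x in a..b, p.eval x =
      ∑ i ∈ Finset.range n, p.coeff i * ((b ^ (i + 1) - a ^ (i + 1)) / (i + 1)) := by
  simp_rw [eval_eq_sum_range' hn]
  rw [intervalIntegral.integral_finsetSum fun i _ =>
    (by fun_prop : Continuous _).intervalIntegrable _ _]
  simp [integral_pow]

theorem natDegree_comp_C_mul_X_add_C {q : ℝ[X]} {a : ℝ} (ha : a ≠ 0) (b : ℝ) :
    (q.comp (C a * X + C b)).natDegree = q.natDegree := by
  rw [natDegree_comp, natDegree_linear ha, mul_one]

theorem cellAvg_comp_C_mul_X_add_C {Δx : ℝ} (hΔx : Δx ≠ 0) (q : ℝ[X]) (m s : ℝ) :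
    cellAvg s 1 (q.comp (C Δx * X + C m)) = cellAvg (Δx * s + m) Δx q := by
  unfold cellAvg
  simp only [eval_comp, eval_add, eval_mul, eval_C, eval_X, div_one, one_mul]
  rw [intervalIntegral.integral_comp_mul_add (fun x => q.eval x) hΔx, smul_eq_mul,
    show Δx * (s - 1 / 2) + m = Δx * s + m - Δx / 2 by ring,
    show Δx * (s + 1 / 2) + m = Δx * s + m + Δx / 2 by ring, one_div Δx]

theorem cellMoment_comp_C_mul_X_add_C {Δx : ℝ} (hΔx : Δx ≠ 0) (q : ℝ[X]) (m s : ℝ) :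
    cellMoment s 1 (q.comp (C Δx * X + C m)) = cellMoment (Δx * s + m) Δx q := by
  unfold cellMoment
  have hx (t : ℝ) : (q.comp (C Δx * X + C m)).eval t * ((t - s) / 1) =
      q.eval (Δx * t + m) * ((Δx * t + m - (Δx * s + m)) / Δx) := by
    simp only [eval_comp, eval_add, eval_mul, eval_C, eval_X]
    field_simp
    ring
  simp only [hx, one_div_one, one_mul]
  rw [intervalIntegral.integral_comp_mul_add (fun x => q.eval x * ((x - (Δx * s + m)) / Δx)) hΔx,
    smul_eq_mul, show Δx * (s - 1 / 2) + m = Δx * s + m - Δx / 2 by ring,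
    show Δx * (s + 1 / 2) + m = Δx * s + m + Δx / 2 by ring, one_div Δx]

theorem cellAvg_one_of_natDegree_le_three {r : ℝ[X]} (hr : r.natDegree ≤ 3) (s : ℝ) :
    cellAvg s 1 r =
      r.coeff 0 + r.coeff 1 * s + r.coeff 2 * (s ^ 2 + 1 / 12) + r.coeff 3 * (s ^ 3 + s / 4) := by
  simp only [cellAvg, integral_eval_eq_sum (Nat.lt_succ_of_le hr), Finset.sum_range_succ,
    Finset.sum_range_zero]
  ring

theorem cellMoment_one_of_natDegree_le_three {r : ℝ[X]} (hr : r.natDegree ≤ 3) (s : ℝ) :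
    cellMoment s 1 r = r.coeff 1 / 12 + r.coeff 2 * s / 6 + r.coeff 3 * (s ^ 2 / 4 + 1 / 80) := by
  have hdeg : (r * (X - C s)).natDegree < 5 := by
    have := natDegree_mul_le (p := r) (q := X - C s)
    rw [natDegree_X_sub_C] at this
    omega
  have hcoeff : r.coeff 4 = 0 := coeff_eq_zero_of_natDegree_lt (by omega)
  have hx (t : ℝ) : r.eval t * ((t - s) / 1) = (r * (X - C s)).eval t := by simp
  simp only [cellMoment, hx, integral_eval_eq_sum hdeg, Finset.sum_range_succ,
    Finset.sum_range_zero, coeff_mul_X_sub_C, mul_coeff_zero, coeff_sub, coeff_X_zero, coeff_C_zero,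
    hcoeff]
  push_cast
  ring

noncomputable def localCubic (ub ubp vb vbp : ℝ) : ℝ[X] :=
  C ((ub + ubp) / 2 + 2 * (vb - vbp)) + C (9 / 4 * (ubp - ub) - 15 / 2 * (vb + vbp)) * X +
    C (6 * (vbp - vb)) * X ^ 2 + C (5 / 2 * (ub - ubp) + 15 * (vb + vbp)) * X ^ 3

theorem natDegree_localCubic_le (ub ubp vb vbp : ℝ) :
    (localCubic ub ubp vb vbp).natDegree ≤ 3 := by
  unfold localCubic
  compute_degree

theorem eq_localCubic_iff {r : ℝ[X]} (hr : r.natDegree ≤ 3) (ub ubp vb vbp : ℝ) :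
    r = localCubic ub ubp vb vbp ↔
      cellAvg (-1 / 2) 1 r = ub ∧ cellAvg (1 / 2) 1 r = ubp ∧
        cellMoment (-1 / 2) 1 r = vb ∧ cellMoment (1 / 2) 1 r = vbp := by
  simp only [cellAvg_one_of_natDegree_le_three hr, cellMoment_one_of_natDegree_le_three hr]
  constructor
  · rintro rfl
    simp only [localCubic, coeff_add, coeff_C_mul_X_pow, coeff_C_mul_X, coeff_C]
    refine ⟨?_, ?_, ?_, ?_⟩ <;> norm_num <;> ring
  · rintro ⟨h1, h2, h3, h4⟩
    ext (_ | _ | _ | _ | n) <;>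
      simp only [localCubic, coeff_add, coeff_C_mul_X_pow, coeff_C_mul_X, coeff_C] <;> norm_num
    · linear_combination (1 / 2) * h1 + (1 / 2) * h2 + 2 * h3 - 2 * h4
    · linear_combination (-9 / 4) * h1 + (9 / 4) * h2 - (15 / 2) * h3 - (15 / 2) * h4
    · linear_combination 6 * h4 - 6 * h3
    · linear_combination (5 / 2) * h1 - (5 / 2) * h2 + 15 * h3 + 15 * h4
    · rw [coeff_eq_zero_of_natDegree_lt (by omega), if_neg (by omega), if_neg (by omega), add_zero]

theorem comp_eq_localCubic_iff {Δx : ℝ} (hΔx : Δx ≠ 0) {q : ℝ[X]} (hq : q.natDegree ≤ 3)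
    (xi ub ubp vb vbp : ℝ) :
    q.comp (C Δx * X + C (xi + Δx / 2)) = localCubic ub ubp vb vbp ↔
      cellAvg xi Δx q = ub ∧ cellAvg (xi + Δx) Δx q = ubp ∧
        cellMoment xi Δx q = vb ∧ cellMoment (xi + Δx) Δx q = vbp := by
  rw [eq_localCubic_iff ((natDegree_comp_C_mul_X_add_C hΔx _).trans_le hq),
    cellAvg_comp_C_mul_X_add_C hΔx, cellAvg_comp_C_mul_X_add_C hΔx,
    cellMoment_comp_C_mul_X_add_C hΔx, cellMoment_comp_C_mul_X_add_C hΔx,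
    show Δx * (-1 / 2) + (xi + Δx / 2) = xi by ring,
    show Δx * (1 / 2) + (xi + Δx / 2) = xi + Δx by ring]

theorem stmt10 (xi Δx : ℝ) (hΔx : 0 < Δx) (ub ubp vb vbp : ℝ) :
    (∃! q : Polynomial ℝ, q.degree ≤ 3 ∧
      cellAvg xi Δx q = ub ∧ cellAvg (xi + Δx) Δx q = ubp ∧
      cellMoment xi Δx q = vb ∧ cellMoment (xi + Δx) Δx q = vbp) ∧
    (∀ q : Polynomial ℝ, q.degree ≤ 3 →
      cellAvg xi Δx q = ub → cellAvg (xi + Δx) Δx q = ubp →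
      cellMoment xi Δx q = vb → cellMoment (xi + Δx) Δx q = vbp →
      q.eval (xi + Δx / 2) = (1 / 2) * ub + (1 / 2) * ubp + 2 * vb - 2 * vbp) := by
  let _ := invertibleOfNonzero hΔx.ne'
  set e := algEquivCMulXAddC Δx (xi + Δx / 2)
  set L := localCubic ub ubp vb vbp
  have he (q : ℝ[X]) : e q = q.comp (C Δx * X + C (xi + Δx / 2)) :=
    (algEquivCMulXAddC_apply _ _ q).trans comp_eq_aeval.symm
  have hdata {q : ℝ[X]} (hq : q.degree ≤ 3) :
      e q = L ↔ cellAvg xi Δx q = ub ∧ cellAvg (xi + Δx) Δx q = ubp ∧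
        cellMoment xi Δx q = vb ∧ cellMoment (xi + Δx) Δx q = vbp := by
    rw [he]
    exact comp_eq_localCubic_iff hΔx.ne' (natDegree_le_iff_degree_le.2 hq) xi ub ubp vb vbp
  refine ⟨⟨e.symm L, ?_, fun q ⟨hq, hqd⟩ => ?_⟩, fun q hq h1 h2 h3 h4 => ?_⟩
  · have hL : (e.symm L).degree ≤ 3 := by
      refine natDegree_le_iff_degree_le.1 ?_
      rw [← natDegree_comp_C_mul_X_add_C hΔx.ne' (xi + Δx / 2), ← he, e.apply_symm_apply]
      exact natDegree_localCubic_le ub ubp vb vbp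
    exact ⟨hL, (hdata hL).1 (e.apply_symm_apply L)⟩
  · exact e.injective (((hdata hq).2 hqd).trans (e.apply_symm_apply L).symm)
  · have := congrArg (eval 0) ((hdata hq).2 ⟨h1, h2, h3, h4⟩)
    simp only [he, L, localCubic, eval_comp, eval_add, eval_mul, eval_pow, eval_C, eval_X, mul_zero,
      zero_add] at this
    linear_combination this
end

section
/- Given real numbers ū_{i−1}, ū_i, ū_{i+1}, v̄_{i−1}, v̄_i, v̄_{i+1}, there exists a unique real polynomial q₀ of degree at most 5 whose cell average over I_{i+j} equals ū_{i+j} and whose first-order moment over I_{i+j} equals v̄_{i+j} for each j = −1, 0, 1; moreover q₀(x_i + Δx/2) = (13/108)ū_{i−1} + (7/12)ū_i + (8/27)ū_{i+1} + (25/54)v̄_{i−1} + (241/54)v̄_i − (28/27)v̄_{i+1}. -/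
/-!
The affine substitution `x = xᵢ + Δx s` preserves degrees and turns the averages and first moments
over the three cells into those over unit cells centred at `-1, 0, 1`. There the six data of a
polynomial `p` of degree at most `5` are `M b`, where `b` is the coefficient vector of `p` and the
`k`-th column of the moment matrix `M` holds the data of `s ^ k`. `M` is invertible, which gives
existence and uniqueness, and the weights `w` of the formula satisfy `wᵀ M = (2⁻ᵏ)ₖ`, so that
`w ⬝ (M b) = p (1/2)`.
-/

open MeasureTheory Polynomial

open Finset intervalIntegral
open scoped Matrix

section Rescaling

variable {Δx : ℝ} (hΔx : Δx ≠ 0) (xi c : ℝ) (q : ℝ[X])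
include hΔx

theorem cellAvg_eq_cellAvg_comp_affine :
    cellAvg (xi + c * Δx) Δx q = cellAvg c 1 (q.comp (C Δx * X + C xi)) := by
  have hq : ∀ x, (q.comp (C Δx * X + C xi)).eval x = q.eval (Δx * x + xi) := by simp
  simp only [cellAvg, hq]
  rw [integral_comp_mul_add (fun y => q.eval y) hΔx, smul_eq_mul, one_div_one, one_mul, one_div]
  congr 2 <;> ring

theorem cellMoment_eq_cellMoment_comp_affine :
    cellMoment (xi + c * Δx) Δx q = cellMoment c 1 (q.comp (C Δx * X + C xi)) := by
  set f : ℝ → ℝ := fun y => q.eval y * ((y - (xi + c * Δx)) / Δx)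
  have hf : ∀ x, (q.comp (C Δx * X + C xi)).eval x * ((x - c) / 1) = f (Δx * x + xi) := by
    intro x
    simp only [f, eval_comp, eval_add, eval_mul, eval_C, eval_X]
    field_simp
    ring
  simp only [cellMoment, hf]
  rw [integral_comp_mul_add f hΔx, smul_eq_mul, one_div_one, one_mul, one_div]
  congr 2 <;> ring

theorem comp_affine_bijective : Function.Bijective fun q : ℝ[X] => q.comp (C Δx * X + C xi) := by
  have := invertibleOfNonzero hΔx
  convert (algEquivCMulXAddC Δx xi).bijective
  simp [comp_eq_aeval]

theorem degree_comp_affine : (q.comp (C Δx * X + C xi)).degree = q.degree := by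
  rw [degree_comp (by rw [degree_linear hΔx]; exact zero_lt_one), degree_linear hΔx, mul_one]

end Rescaling

theorem cellAvg_eq_sum_coeff_mul {n : ℕ} {p : ℝ[X]} (hp : p.natDegree < n) (xc Δx : ℝ) :
    cellAvg xc Δx p = ∑ k ∈ range n, p.coeff k * cellAvg xc Δx (X ^ k) := by
  simp only [cellAvg, eval_pow, eval_X, eval_eq_sum_range' hp]
  rw [integral_finsetSum fun k _ => (by fun_prop : Continuous _).intervalIntegrable _ _]
  simp only [intervalIntegral.integral_const_mul, mul_sum]
  exact sum_congr rfl fun k _ => mul_left_comm _ _ _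

theorem cellMoment_eq_sum_coeff_mul {n : ℕ} {p : ℝ[X]} (hp : p.natDegree < n) (xc Δx : ℝ) :
    cellMoment xc Δx p = ∑ k ∈ range n, p.coeff k * cellMoment xc Δx (X ^ k) := by
  simp only [cellMoment, eval_pow, eval_X, eval_eq_sum_range' hp, sum_mul]
  rw [integral_finsetSum fun k _ => (by fun_prop : Continuous _).intervalIntegrable _ _]
  simp only [mul_assoc, intervalIntegral.integral_const_mul, mul_sum]
  exact sum_congr rfl fun k _ => mul_left_comm _ _ _

theorem cellAvg_one_X_pow (c : ℝ) (k : ℕ) :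
    cellAvg c 1 (X ^ k) = ((c + 1 / 2) ^ (k + 1) - (c - 1 / 2) ^ (k + 1)) / (k + 1) := by
  simp [cellAvg, integral_pow]

theorem cellMoment_one_X_pow (c : ℝ) (k : ℕ) :
    cellMoment c 1 (X ^ k) = cellAvg c 1 (X ^ (k + 1)) - c * cellAvg c 1 (X ^ k) := by
  have h : ∀ x : ℝ, x ^ k * ((x - c) / 1) = x ^ (k + 1) - c * x ^ k := fun x => by ring
  simp only [cellMoment, cellAvg, eval_pow, eval_X, h, one_div_one, one_mul]
  rw [intervalIntegral.integral_sub ((by fun_prop : Continuous _).intervalIntegrable _ _)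
    ((by fun_prop : Continuous _).intervalIntegrable _ _), intervalIntegral.integral_const_mul]

theorem mem_degreeLT_succ_iff {R : Type*} [Semiring R] {n : ℕ} {p : R[X]} :
    p ∈ degreeLT R (n + 1) ↔ p.degree ≤ n := by
  rw [degreeLT_succ_eq_degreeLE, mem_degreeLE]

noncomputable def stencilData (xi Δx : ℝ) (q : ℝ[X]) : Fin 6 → ℝ :=
  ![cellAvg (xi - Δx) Δx q, cellAvg xi Δx q, cellAvg (xi + Δx) Δx q,
    cellMoment (xi - Δx) Δx q, cellMoment xi Δx q, cellMoment (xi + Δx) Δx q]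

theorem stencilData_eq_iff (xi Δx : ℝ) (q : ℝ[X]) (a₀ a₁ a₂ a₃ a₄ a₅ : ℝ) :
    stencilData xi Δx q = ![a₀, a₁, a₂, a₃, a₄, a₅] ↔
      cellAvg (xi - Δx) Δx q = a₀ ∧ cellAvg xi Δx q = a₁ ∧ cellAvg (xi + Δx) Δx q = a₂ ∧
      cellMoment (xi - Δx) Δx q = a₃ ∧ cellMoment xi Δx q = a₄ ∧
      cellMoment (xi + Δx) Δx q = a₅ := by
  simp [stencilData, Matrix.vecCons_inj]

theorem stencilData_eq_stencilData_comp_affine {Δx : ℝ} (hΔx : Δx ≠ 0) (xi : ℝ) (q : ℝ[X]) :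
    stencilData xi Δx q = stencilData 0 1 (q.comp (C Δx * X + C xi)) := by
  have avg := cellAvg_eq_cellAvg_comp_affine hΔx xi
  have mom := cellMoment_eq_cellMoment_comp_affine hΔx xi
  ext r
  fin_cases r
  · simpa [stencilData, sub_eq_add_neg] using avg (-1) q
  · simpa [stencilData] using avg 0 q
  · simpa [stencilData] using avg 1 q
  · simpa [stencilData, sub_eq_add_neg] using mom (-1) q
  · simpa [stencilData] using mom 0 q
  · simpa [stencilData] using mom 1 q

noncomputable def momentMatrix : Matrix (Fin 6) (Fin 6) ℝ :=
  Matrix.of fun r k => stencilData 0 1 (X ^ (k : ℕ)) r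

theorem momentMatrix_eq : momentMatrix = !![1, -1, 13/12, -5/4, 121/80, -91/48;
    1, 0, 1/12, 0, 1/80, 0;
    1, 1, 13/12, 5/4, 121/80, 91/48;
    0, 1/12, -1/6, 21/80, -23/60, 731/1344;
    0, 1/12, 0, 1/80, 0, 1/448;
    0, 1/12, 1/6, 21/80, 23/60, 731/1344] := by
  ext r k
  simp only [momentMatrix, stencilData, Matrix.of_apply, cellMoment_one_X_pow, cellAvg_one_X_pow]
  revert r k
  norm_num [Fin.forall_fin_succ]

theorem stencilData_eq_momentMatrix_mulVec {p : ℝ[X]} (hp : p ∈ degreeLT ℝ 6) :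
    stencilData 0 1 p = momentMatrix *ᵥ degreeLTEquiv ℝ 6 ⟨p, hp⟩ := by
  have hn : p.natDegree < 6 :=
    Nat.lt_succ_of_le (natDegree_le_of_degree_le (mem_degreeLT_succ_iff.1 hp))
  ext r
  simp only [Matrix.mulVec, dotProduct, momentMatrix, Matrix.of_apply, degreeLTEquiv,
    LinearEquiv.coe_mk, LinearMap.coe_mk, AddHom.coe_mk]
  rw [Fin.sum_univ_eq_sum_range (fun k => stencilData 0 1 (X ^ k) r * p.coeff k)]
  fin_cases r <;>
    simp [stencilData, cellAvg_eq_sum_coeff_mul hn, cellMoment_eq_sum_coeff_mul hn, mul_comm]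

theorem momentMatrix_mulVec_injective : Function.Injective momentMatrix.mulVec := by
  intro b b' h
  simp only [momentMatrix_eq, funext_iff, Fin.forall_fin_succ, Matrix.cons_mulVec,
    Matrix.empty_mulVec, dotProduct, Fin.sum_univ_six, Matrix.cons_val_zero, Matrix.cons_val_one,
    Matrix.cons_val, Matrix.cons_val_succ, Matrix.cons_val_fin_one, forall_const] at h
  obtain ⟨h0, h1, h2, h3, h4, h5⟩ := h
  ext k
  fin_cases k <;> simp only [Fin.zero_eta, Fin.mk_one, Fin.reduceFinMk] <;> linarith

theorem momentMatrix_mulVec_bijective : Function.Bijective momentMatrix.mulVec :=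
  ⟨momentMatrix_mulVec_injective, Matrix.mulVec_surjective_iff_isUnit.2
    (Matrix.mulVec_injective_iff_isUnit.1 momentMatrix_mulVec_injective)⟩

noncomputable def rightFaceWeights : Fin 6 → ℝ :=
  ![13 / 108, 7 / 12, 8 / 27, 25 / 54, 241 / 54, -28 / 27]

theorem rightFaceWeights_vecMul_momentMatrix :
    rightFaceWeights ᵥ* momentMatrix = fun k : Fin 6 => (1 / 2 : ℝ) ^ (k : ℕ) := by
  rw [momentMatrix_eq]
  ext k
  fin_cases k <;> norm_num [rightFaceWeights, Matrix.vecMul, dotProduct, Fin.sum_univ_succ]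

theorem existsUnique_stencilData_one_eq (u : Fin 6 → ℝ) :
    ∃! p : ℝ[X], p.degree ≤ 5 ∧ stencilData 0 1 p = u := by
  obtain ⟨b, hb⟩ := momentMatrix_mulVec_bijective.2 u
  let e := degreeLTEquiv ℝ 6
  refine ⟨e.symm b, ⟨mem_degreeLT_succ_iff.1 (e.symm b).2, ?_⟩, ?_⟩
  · rw [stencilData_eq_momentMatrix_mulVec (e.symm b).2, Subtype.coe_eta, e.apply_symm_apply, hb]
  · rintro p ⟨hp, hpu⟩
    have hb' : e ⟨p, mem_degreeLT_succ_iff.2 hp⟩ = b :=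
      momentMatrix_mulVec_bijective.1 (by rw [← stencilData_eq_momentMatrix_mulVec, hpu, hb])
    rw [← hb', e.symm_apply_apply]

theorem eval_half_eq_rightFaceWeights_dotProduct {p : ℝ[X]} (hp : p.degree ≤ 5) :
    p.eval (1 / 2) = rightFaceWeights ⬝ᵥ stencilData 0 1 p := by
  have hp' := mem_degreeLT_succ_iff.2 hp
  rw [eval_eq_sum_degreeLTEquiv hp', stencilData_eq_momentMatrix_mulVec hp',
    Matrix.dotProduct_mulVec, rightFaceWeights_vecMul_momentMatrix, dotProduct]
  exact sum_congr rfl fun k _ => mul_comm _ _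

theorem existsUnique_stencilData_eq {Δx : ℝ} (hΔx : Δx ≠ 0) (xi : ℝ) (u : Fin 6 → ℝ) :
    ∃! q : ℝ[X], q.degree ≤ 5 ∧ stencilData xi Δx q = u := by
  have h := (comp_affine_bijective hΔx xi).existsUnique_iff.1 (existsUnique_stencilData_one_eq u)
  simpa only [degree_comp_affine hΔx, ← stencilData_eq_stencilData_comp_affine hΔx] using h

theorem eval_add_half_eq_rightFaceWeights_dotProduct {Δx : ℝ} (hΔx : Δx ≠ 0) (xi : ℝ) {q : ℝ[X]}
    (hq : q.degree ≤ 5) :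
    q.eval (xi + Δx / 2) = rightFaceWeights ⬝ᵥ stencilData xi Δx q := by
  rw [stencilData_eq_stencilData_comp_affine hΔx,
    ← eval_half_eq_rightFaceWeights_dotProduct (by rwa [degree_comp_affine hΔx])]
  simp only [eval_comp, eval_add, eval_mul, eval_C, eval_X]
  congr 1
  ring

theorem stmt11 (xi Δx : ℝ) (hΔx : 0 < Δx) (ubm ub ubp vbm vb vbp : ℝ) :
    (∃! q : Polynomial ℝ, q.degree ≤ 5 ∧
      cellAvg (xi - Δx) Δx q = ubm ∧ cellAvg xi Δx q = ub ∧ cellAvg (xi + Δx) Δx q = ubp ∧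
      cellMoment (xi - Δx) Δx q = vbm ∧ cellMoment xi Δx q = vb ∧
      cellMoment (xi + Δx) Δx q = vbp) ∧
    (∀ q : Polynomial ℝ, q.degree ≤ 5 →
      cellAvg (xi - Δx) Δx q = ubm → cellAvg xi Δx q = ub → cellAvg (xi + Δx) Δx q = ubp →
      cellMoment (xi - Δx) Δx q = vbm → cellMoment xi Δx q = vb →
      cellMoment (xi + Δx) Δx q = vbp →
      q.eval (xi + Δx / 2) =
        (13 / 108) * ubm + (7 / 12) * ub + (8 / 27) * ubp
          + (25 / 54) * vbm + (241 / 54) * vb - (28 / 27) * vbp) := by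
  refine ⟨?_, fun q hq h₀ h₁ h₂ h₃ h₄ h₅ => ?_⟩
  · simpa only [stencilData_eq_iff] using
      existsUnique_stencilData_eq hΔx.ne' xi ![ubm, ub, ubp, vbm, vb, vbp]
  · rw [eval_add_half_eq_rightFaceWeights_dotProduct hΔx.ne' xi hq,
      (stencilData_eq_iff xi Δx q ..).2 ⟨h₀, h₁, h₂, h₃, h₄, h₅⟩]
    simp only [rightFaceWeights, dotProduct, Fin.sum_univ_six, Matrix.cons_val_zero,
      Matrix.cons_val_one, Matrix.cons_val]
    ring
end

section
/- Let q₁ be the unique cubic polynomial whose cell averages over I_{i−1} and I_i equal ū_{i−1} and ū_i and whose first-order moments over I_{i−1} and I_i equal v̄_{i−1} and v̄_i. Then its smoothness indicator over I_i, namely Σ_{α=1}^{3} Δx^{2α−1} ∫_{I_i} (q₁^{(α)}(x))² dx, equals (1/16)(ū_{i−1} − ū_i + 6v̄_{i−1} + 54v̄_i)² + (13/48)(15ū_{i−1} − 15ū_i + 66v̄_{i−1} + 114v̄_i)² + (3905/16)(ū_{i−1} − ū_i + 6v̄_{i−1} + 6v̄_i)². -/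
open MeasureTheory Polynomial

lemma integ4 (lo hi a b c d e : ℝ) :
    (∫ x in lo..hi, (a + b*x + c*x^2 + d*x^3 + e*x^4)) =
      a*(hi-lo) + b/2*(hi^2-lo^2) + c/3*(hi^3-lo^3) + d/4*(hi^4-lo^4) + e/5*(hi^5-lo^5) := by
  have h : ∀ x : ℝ, HasDerivAt (fun x : ℝ => a*x + b/2*x^2 + c/3*x^3 + d/4*x^4 + e/5*x^5)
      (a + b*x + c*x^2 + d*x^3 + e*x^4) x := by
    intro x
    have := (((((hasDerivAt_id x).const_mul a).add
      (((hasDerivAt_pow 2 x).const_mul (b/2)))).add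
      (((hasDerivAt_pow 3 x).const_mul (c/3)))).add
      (((hasDerivAt_pow 4 x).const_mul (d/4)))).add
      (((hasDerivAt_pow 5 x).const_mul (e/5)))
    refine (this.congr_deriv (by push_cast; ring)).congr_of_eventuallyEq
      (Filter.Eventually.of_forall fun y => ?_)
    simp only [Pi.add_apply, id]
  rw [intervalIntegral.integral_eq_sub_of_hasDerivAt (fun x _ => h x)
    (by apply Continuous.intervalIntegrable; continuity)]
  ring

lemma integ4' (lo hi a b c d e : ℝ) (f : ℝ → ℝ)
    (hf : ∀ x, f x = a + b*x + c*x^2 + d*x^3 + e*x^4) :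
    (∫ x in lo..hi, f x) =
      a*(hi-lo) + b/2*(hi^2-lo^2) + c/3*(hi^3-lo^3) + d/4*(hi^4-lo^4) + e/5*(hi^5-lo^5) := by
  rw [← integ4 lo hi a b c d e]
  apply intervalIntegral.integral_congr
  intro x _
  exact hf x

set_option maxHeartbeats 2000000 in
theorem stmt13 (xi Δx : ℝ) (hΔx : 0 < Δx) (ubm ub vbm vb : ℝ)
    (q1 : Polynomial ℝ) (hdeg : q1.degree ≤ 3)
    (havgm : cellAvg (xi - Δx) Δx q1 = ubm) (havg : cellAvg xi Δx q1 = ub)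
    (hmomm : cellMoment (xi - Δx) Δx q1 = vbm) (hmom : cellMoment xi Δx q1 = vb) :
    smoothInd xi Δx 3 q1 =
      (1 / 16) * (ubm - ub + 6 * vbm + 54 * vb) ^ 2
        + (13 / 48) * (15 * ubm - 15 * ub + 66 * vbm + 114 * vb) ^ 2
        + (3905 / 16) * (ubm - ub + 6 * vbm + 6 * vb) ^ 2 := by
  have hΔ : Δx ≠ 0 := ne_of_gt hΔx
  set a := q1.coeff 0
  set b := q1.coeff 1
  set c := q1.coeff 2
  set d := q1.coeff 3
  have hq1 : q1 = C a + C b * X + C c * X^2 + C d * X^3 := by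
    ext n
    rcases n with _|_|_|_|n
    · simp; rfl
    · simp [coeff_one, coeff_X]; rfl
    · simp [coeff_X_pow, coeff_X]; rfl
    · simp [coeff_X_pow, coeff_X]; rfl
    · rw [coeff_eq_zero_of_degree_lt (lt_of_le_of_lt hdeg (by exact_mod_cast by omega))]
      simp [coeff_X_pow, coeff_X]
  have e0 : ∀ x : ℝ, q1.eval x = a + b*x + c*x^2 + d*x^3 + 0*x^4 := by
    intro x; rw [hq1]; simp
  have e1 : ∀ x : ℝ, ((⇑derivative)^[1] q1).eval x ^ 2 =
      b^2 + (4*b*c)*x + (4*c^2+6*b*d)*x^2 + (12*c*d)*x^3 + (9*d^2)*x^4 := by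
    intro x; rw [hq1]; simp; ring
  have e2 : ∀ x : ℝ, ((⇑derivative)^[2] q1).eval x ^ 2 =
      4*c^2 + (24*c*d)*x + (36*d^2)*x^2 + 0*x^3 + 0*x^4 := by
    intro x; rw [hq1]; simp [Function.iterate_succ']; ring
  have e3 : ∀ x : ℝ, ((⇑derivative)^[3] q1).eval x ^ 2 =
      36*d^2 + 0*x + 0*x^2 + 0*x^3 + 0*x^4 := by
    intro x; rw [hq1]; simp [Function.iterate_succ']; ring
  have em : ∀ xc : ℝ, ∀ x : ℝ, q1.eval x * ((x - xc) / Δx) =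
      (-a*xc/Δx) + ((a-b*xc)/Δx)*x + ((b-c*xc)/Δx)*x^2 + ((c-d*xc)/Δx)*x^3 + (d/Δx)*x^4 := by
    intro xc x; rw [hq1]; simp only [eval_add, eval_mul, eval_C, eval_X, eval_pow]; field_simp; ring
  rw [cellAvg, integ4' _ _ _ _ _ _ _ _ e0] at havgm havg
  rw [cellMoment, integ4' _ _ _ _ _ _ _ _ (em (xi - Δx))] at hmomm
  rw [cellMoment, integ4' _ _ _ _ _ _ _ _ (em xi)] at hmom
  rw [smoothInd, show (Finset.Icc 1 3 : Finset ℕ) = {1, 2, 3} from rfl,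
    Finset.sum_insert (by decide), Finset.sum_insert (by decide), Finset.sum_singleton,
    integ4' _ _ _ _ _ _ _ _ e1, integ4' _ _ _ _ _ _ _ _ e2, integ4' _ _ _ _ _ _ _ _ e3]
  subst havgm havg hmomm hmom
  field_simp
  ring
end

section
/- Let q₂ be the unique cubic polynomial whose cell averages over I_{i−1}, I_i, I_{i+1} equal ū_{i−1}, ū_i, ū_{i+1} respectively and whose first-order moment over I_i equals v̄_i. Then its smoothness indicator over I_i, namely Σ_{α=1}^{3} Δx^{2α−1} ∫_{I_i} (q₂^{(α)}(x))² dx, equals (1/484)(ū_{i−1} − ū_{i+1} − 240v̄_i)² + (13/12)(ū_{i−1} − 2ū_i + ū_{i+1})² + (355/44)(ū_{i−1} − ū_{i+1} + 24v̄_i)². -/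
open MeasureTheory Polynomial

lemma integral_quartic (u v c0 c1 c2 c3 c4 : ℝ) :
    (∫ x in u..v, (c0 + c1*x + c2*x^2 + c3*x^3 + c4*x^4)) =
      (c0*v + c1*v^2/2 + c2*v^3/3 + c3*v^4/4 + c4*v^5/5)
      - (c0*u + c1*u^2/2 + c2*u^3/3 + c3*u^4/4 + c4*u^5/5) := by
  have h : ∀ x : ℝ, HasDerivAt (fun y => c0*y + c1*y^2/2 + c2*y^3/3 + c3*y^4/4 + c4*y^5/5)
      (c0 + c1*x + c2*x^2 + c3*x^3 + c4*x^4) x := by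
    intro x
    have H := ((((hasDerivAt_id x).const_mul c0).add
        (((hasDerivAt_pow 2 x).const_mul c1).div_const 2)).add
        (((hasDerivAt_pow 3 x).const_mul c2).div_const 3)).add
        ((((hasDerivAt_pow 4 x).const_mul c3).div_const 4).add
        (((hasDerivAt_pow 5 x).const_mul c4).div_const 5))
    convert H using 1
    · rfl
    · rfl
    · funext y; simp only [id_eq, Pi.add_apply]; ring
    · push_cast; ring
  rw [intervalIntegral.integral_eq_sub_of_hasDerivAt (fun x _ => h x)
    ((by fun_prop : Continuous fun x:ℝ => c0 + c1*x + c2*x^2 + c3*x^3 + c4*x^4).intervalIntegrable _ _)]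


set_option maxHeartbeats 4000000 in
theorem stmt14 (xi Δx : ℝ) (hΔx : 0 < Δx) (ubm ub ubp vb : ℝ)
    (q2 : Polynomial ℝ) (hdeg : q2.degree ≤ 3)
    (havgm : cellAvg (xi - Δx) Δx q2 = ubm) (havg : cellAvg xi Δx q2 = ub)
    (havgp : cellAvg (xi + Δx) Δx q2 = ubp) (hmom : cellMoment xi Δx q2 = vb) :
    smoothInd xi Δx 3 q2 =
      (1 / 484) * (ubm - ubp - 240 * vb) ^ 2
        + (13 / 12) * (ubm - 2 * ub + ubp) ^ 2
        + (355 / 44) * (ubm - ubp + 24 * vb) ^ 2 := by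
  have hne : Δx ≠ 0 := hΔx.ne'
  have hnd : q2.natDegree < 4 :=
    Nat.lt_succ_of_le (Polynomial.natDegree_le_iff_degree_le.mpr hdeg)
  obtain ⟨a, b, c, d, hq⟩ : ∃ a b c d, q2 = C a + C b * X + C c * X^2 + C d * X^3 := by
    refine ⟨q2.coeff 0, q2.coeff 1, q2.coeff 2, q2.coeff 3, ?_⟩
    conv_lhs => rw [Polynomial.as_sum_range' q2 4 hnd]
    simp [Finset.sum_range_succ, ← Polynomial.C_mul_X_pow_eq_monomial]
  subst hq
  rw [← havgm, ← havg, ← havgp, ← hmom]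
  set P : Polynomial ℝ := C a + C b * X + C c * X^2 + C d * X^3 with hP
  have i1 : (⇑derivative)^[1] P = C b + C (2*c) * X + C (3*d) * X^2 := by
    rw [Function.iterate_one, hP]
    simp [Polynomial.derivative_X_pow, Polynomial.C_mul, map_ofNat]
    try ring
  have i2 : (⇑derivative)^[2] P = C (2*c) + C (6*d) * X := by
    rw [show (2:ℕ) = 1+1 from rfl, Function.iterate_succ_apply', i1]
    simp [Polynomial.C_mul, map_ofNat]
    try ring
  have i3 : (⇑derivative)^[3] P = C (6*d) := by
    rw [show (3:ℕ) = 2+1 from rfl, Function.iterate_succ_apply', i2]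
    simp [Polynomial.C_mul, map_ofNat]
    try ring
  simp only [smoothInd, cellAvg, cellMoment]
  rw [show (Finset.Icc 1 3 : Finset ℕ) = {1, 2, 3} from rfl,
    Finset.sum_insert (by decide), Finset.sum_insert (by decide), Finset.sum_singleton,
    i1, i2, i3]
  rw [intervalIntegral.integral_congr
      (show Set.EqOn (fun x => eval x (C b + C (2*c) * X + C (3*d) * X^2) ^ 2)
        (fun x => b^2 + (4*b*c)*x + (4*c^2+6*b*d)*x^2 + (12*c*d)*x^3 + (9*d^2)*x^4) _ from
        fun x _ => by simp only [eval_add, eval_mul, eval_pow, eval_C, eval_X]; ring),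
    intervalIntegral.integral_congr
      (show Set.EqOn (fun x => eval x (C (2*c) + C (6*d) * X) ^ 2)
        (fun x => 4*c^2 + (24*c*d)*x + (36*d^2)*x^2 + 0*x^3 + 0*x^4) _ from
        fun x _ => by simp only [eval_add, eval_mul, eval_C, eval_X]; ring),
    intervalIntegral.integral_congr
      (show Set.EqOn (fun x => eval x (C (6*d)) ^ 2)
        (fun x => 36*d^2 + 0*x + 0*x^2 + 0*x^3 + 0*x^4) _ from
        fun x _ => by simp only [eval_C]; ring),
    intervalIntegral.integral_congr
      (show Set.EqOn (fun x => eval x P)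
        (fun x => a + b*x + c*x^2 + d*x^3 + 0*x^4) _ from
        fun x _ => by rw [hP]; simp only [eval_add, eval_mul, eval_pow, eval_C, eval_X]; ring),
    intervalIntegral.integral_congr
      (show Set.EqOn (fun x => eval x P)
        (fun x => a + b*x + c*x^2 + d*x^3 + 0*x^4) _ from
        fun x _ => by rw [hP]; simp only [eval_add, eval_mul, eval_pow, eval_C, eval_X]; ring),
    intervalIntegral.integral_congr
      (show Set.EqOn (fun x => eval x P)
        (fun x => a + b*x + c*x^2 + d*x^3 + 0*x^4) _ from
        fun x _ => by rw [hP]; simp only [eval_add, eval_mul, eval_pow, eval_C, eval_X]; ring),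
    intervalIntegral.integral_congr
      (show Set.EqOn (fun x => eval x P * ((x - xi) / Δx))
        (fun x => (-(a*xi/Δx)) + ((a - b*xi)/Δx)*x + ((b - c*xi)/Δx)*x^2 + ((c - d*xi)/Δx)*x^3 + (d/Δx)*x^4) _ from
        fun x _ => by
          rw [hP]; simp only [eval_add, eval_mul, eval_pow, eval_C, eval_X]
          field_simp
          ring)]
  simp only [integral_quartic]
  field_simp
  ring
end

section
/- Let q₀ be the unique quintic polynomial whose cell average over I_{i+j} equals ū_{i+j} and whose first-order moment over I_{i+j} equals v̄_{i+j} for each j = −1, 0, 1. Then q₀(x_i + (√5/10)Δx) = ((101/5400)√5 − 1/24)ū_{i−1} + (13/12)ū_i − ((101/5400)√5 + 1/24)ū_{i+1} + ((841/13500)√5 − 3/20)v̄_{i−1} + (10289/6750)√5·v̄_i + (3/20 + (841/13500)√5)v̄_{i+1}. -/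
set_option maxHeartbeats 2000000


open MeasureTheory Polynomial

noncomputable def Fpoly (c0 c1 c2 c3 c4 c5 c6 t : ℝ) : ℝ :=
  c0*t + c1/2*t^2 + c2/3*t^3 + c3/4*t^4 + c4/5*t^5 + c5/6*t^6 + c6/7*t^7

lemma poly_integral (a b c0 c1 c2 c3 c4 c5 c6 : ℝ) :
    ∫ x in a..b, (c0 + c1*x + c2*x^2 + c3*x^3 + c4*x^4 + c5*x^5 + c6*x^6) =
      Fpoly c0 c1 c2 c3 c4 c5 c6 b - Fpoly c0 c1 c2 c3 c4 c5 c6 a := by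
  have H : ∀ x : ℝ, HasDerivAt (fun t : ℝ => Fpoly c0 c1 c2 c3 c4 c5 c6 t)
      (c0 + c1*x + c2*x^2 + c3*x^3 + c4*x^4 + c5*x^5 + c6*x^6) x := by
    intro x
    have H0 := (((((((hasDerivAt_pow 1 x).const_mul c0).add
      ((hasDerivAt_pow 2 x).const_mul (c1/2))).add
      ((hasDerivAt_pow 3 x).const_mul (c2/3))).add
      ((hasDerivAt_pow 4 x).const_mul (c3/4))).add
      ((hasDerivAt_pow 5 x).const_mul (c4/5))).add
      ((hasDerivAt_pow 6 x).const_mul (c5/6))).add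
      ((hasDerivAt_pow 7 x).const_mul (c6/7))
    convert H0 using 1
    · rfl
    · rfl
    · funext t; show Fpoly c0 c1 c2 c3 c4 c5 c6 t = _; unfold Fpoly; push_cast; simp only [Pi.add_apply]; ring
    · push_cast; ring
  rw [intervalIntegral.integral_eq_sub_of_hasDerivAt (fun x _ => H x)
    ((Continuous.intervalIntegrable (by continuity)) a b)]


lemma avg_eq_s16 (xc Δx : ℝ) (q : Polynomial ℝ) (a0 a1 a2 a3 a4 a5 : ℝ)
    (hq : ∀ x, q.eval x = a0 + a1*x + a2*x^2 + a3*x^3 + a4*x^4 + a5*x^5) :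
    cellAvg xc Δx q = (1/Δx) * (Fpoly a0 a1 a2 a3 a4 a5 0 (xc + Δx/2)
      - Fpoly a0 a1 a2 a3 a4 a5 0 (xc - Δx/2)) := by
  unfold cellAvg
  rw [show (∫ x in (xc - Δx/2)..(xc + Δx/2), q.eval x)
      = ∫ x in (xc - Δx/2)..(xc + Δx/2),
        (a0 + a1*x + a2*x^2 + a3*x^3 + a4*x^4 + a5*x^5 + 0*x^6) from
    intervalIntegral.integral_congr (fun x _ => by rw [hq x]; ring), poly_integral]

lemma mom_eq_s16 (xc Δx : ℝ) (q : Polynomial ℝ) (a0 a1 a2 a3 a4 a5 : ℝ)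
    (hq : ∀ x, q.eval x = a0 + a1*x + a2*x^2 + a3*x^3 + a4*x^4 + a5*x^5) :
    cellMoment xc Δx q = (1/Δx) * (Fpoly (-(xc*a0)/Δx) ((a0 - xc*a1)/Δx)
      ((a1 - xc*a2)/Δx) ((a2 - xc*a3)/Δx) ((a3 - xc*a4)/Δx) ((a4 - xc*a5)/Δx) (a5/Δx)
      (xc + Δx/2)
      - Fpoly (-(xc*a0)/Δx) ((a0 - xc*a1)/Δx) ((a1 - xc*a2)/Δx) ((a2 - xc*a3)/Δx)
      ((a3 - xc*a4)/Δx) ((a4 - xc*a5)/Δx) (a5/Δx) (xc - Δx/2)) := by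
  unfold cellMoment
  rw [show (∫ x in (xc - Δx/2)..(xc + Δx/2), q.eval x * ((x - xc) / Δx))
      = ∫ x in (xc - Δx/2)..(xc + Δx/2),
        ((-(xc*a0)/Δx) + ((a0 - xc*a1)/Δx)*x + ((a1 - xc*a2)/Δx)*x^2
          + ((a2 - xc*a3)/Δx)*x^3 + ((a3 - xc*a4)/Δx)*x^4 + ((a4 - xc*a5)/Δx)*x^5
          + (a5/Δx)*x^6) from
    intervalIntegral.integral_congr (fun x _ => by rw [hq x]; ring), poly_integral]


theorem stmt16 (xi Δx : ℝ) (hΔx : 0 < Δx) (ubm ub ubp vbm vb vbp : ℝ)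
    (q0 : Polynomial ℝ) (hdeg : q0.degree ≤ 5)
    (havgm : cellAvg (xi - Δx) Δx q0 = ubm) (havg : cellAvg xi Δx q0 = ub)
    (havgp : cellAvg (xi + Δx) Δx q0 = ubp)
    (hmomm : cellMoment (xi - Δx) Δx q0 = vbm) (hmom : cellMoment xi Δx q0 = vb)
    (hmomp : cellMoment (xi + Δx) Δx q0 = vbp) :
    q0.eval (xi + (Real.sqrt 5 / 10) * Δx) =
      ((101 / 5400) * Real.sqrt 5 - 1 / 24) * ubm + (13 / 12) * ub
        - ((101 / 5400) * Real.sqrt 5 + 1 / 24) * ubp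
        + ((841 / 13500) * Real.sqrt 5 - 3 / 20) * vbm
        + (10289 / 6750) * Real.sqrt 5 * vb
        + (3 / 20 + (841 / 13500) * Real.sqrt 5) * vbp := by
  have hne : Δx ≠ 0 := ne_of_gt hΔx
  set a0 := q0.coeff 0 with ha0
  set a1 := q0.coeff 1 with ha1
  set a2 := q0.coeff 2 with ha2
  set a3 := q0.coeff 3 with ha3
  set a4 := q0.coeff 4 with ha4
  set a5 := q0.coeff 5 with ha5
  have hnd : q0.natDegree < 6 :=
    Nat.lt_succ_of_le (Polynomial.natDegree_le_iff_degree_le.mpr hdeg)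
  have heval : ∀ x : ℝ, q0.eval x = a0 + a1*x + a2*x^2 + a3*x^3 + a4*x^4 + a5*x^5 := by
    intro x
    rw [Polynomial.eval_eq_sum_range' hnd]
    simp [Finset.sum_range_succ]
    rfl
  have hs : Real.sqrt 5 ^ 2 = 5 := Real.sq_sqrt (by norm_num)
  have h1 : ((-91 : ℝ)/48) * a5 * Δx ^ 6 + ((121 : ℝ)/16) * a5 * xi * Δx ^ 5 + ((-25 : ℝ)/2) * a5 * xi ^ 2 * Δx ^ 4 + ((65 : ℝ)/6) * a5 * xi ^ 3 * Δx ^ 3 + (-5 : ℝ) * a5 * xi ^ 4 * Δx ^ 2 + (1 : ℝ) * a5 * xi ^ 5 * Δx + ((121 : ℝ)/80) * a4 * Δx ^ 5 + (-5 : ℝ) * a4 * xi * Δx ^ 4 + ((13 : ℝ)/2) * a4 * xi ^ 2 * Δx ^ 3 + (-4 : ℝ) * a4 * xi ^ 3 * Δx ^ 2 + (1 : ℝ) * a4 * xi ^ 4 * Δx + ((-5 : ℝ)/4) * a3 * Δx ^ 4 + ((13 : ℝ)/4) * a3 * xi * Δx ^ 3 + (-3 : ℝ) * a3 * xi ^ 2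 * Δx ^ 2 + (1 : ℝ) * a3 * xi ^ 3 * Δx + ((13 : ℝ)/12) * a2 * Δx ^ 3 + (-2 : ℝ) * a2 * xi * Δx ^ 2 + (1 : ℝ) * a2 * xi ^ 2 * Δx + (-1 : ℝ) * a1 * Δx ^ 2 + (1 : ℝ) * a1 * xi * Δx + (1 : ℝ) * a0 * Δx = Δx * ubm := by
    rw [← havgm, avg_eq_s16 (xi - Δx) Δx q0 a0 a1 a2 a3 a4 a5 heval]
    unfold Fpoly
    field_simp
    ring
  have h2 : ((1 : ℝ)/16) * a5 * xi * Δx ^ 5 + ((5 : ℝ)/6) * a5 * xi ^ 3 * Δx ^ 3 + (1 : ℝ) * a5 * xi ^ 5 * Δx + ((1 : ℝ)/80) * a4 * Δx ^ 5 + ((1 : ℝ)/2) * a4 * xi ^ 2 * Δx ^ 3 + (1 : ℝ) * a4 * xi ^ 4 * Δx + ((1 : ℝ)/4) * a3 * xi * Δx ^ 3 + (1 : ℝ) * a3 * xi ^ 3 * Δx + ((1 : ℝ)/12) * a2 * Δx ^ 3 + (1 : ℝ) * a2 * xi ^ 2 * Δx + (1 : ℝ) * a1 * xi * Δx + (1 :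 ℝ) * a0 * Δx = Δx * ub := by
    rw [← havg, avg_eq_s16 xi Δx q0 a0 a1 a2 a3 a4 a5 heval]
    unfold Fpoly
    field_simp
    ring
  have h3 : ((91 : ℝ)/48) * a5 * Δx ^ 6 + ((121 : ℝ)/16) * a5 * xi * Δx ^ 5 + ((25 : ℝ)/2) * a5 * xi ^ 2 * Δx ^ 4 + ((65 : ℝ)/6) * a5 * xi ^ 3 * Δx ^ 3 + (5 : ℝ) * a5 * xi ^ 4 * Δx ^ 2 + (1 : ℝ) * a5 * xi ^ 5 * Δx + ((121 : ℝ)/80) * a4 * Δx ^ 5 + (5 : ℝ) * a4 * xi * Δx ^ 4 + ((13 : ℝ)/2) * a4 * xi ^ 2 * Δx ^ 3 + (4 : ℝ) * a4 * xi ^ 3 * Δx ^ 2 + (1 : ℝ) * a4 * xi ^ 4 * Δx + ((5 : ℝ)/4) * a3 * Δx ^ 4 + ((13 : ℝ)/4) * a3 * xi * Δx ^ 3 + (3 : ℝ) * a3 * xi ^ 2 * Δx ^ 2 + (1 : ℝ) * a3 * xi ^ 3 * Δx + ((13 : ℝ)/12) * a2 * Δx ^ 3 + (2 : ℝ) * a2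 * xi * Δx ^ 2 + (1 : ℝ) * a2 * xi ^ 2 * Δx + (1 : ℝ) * a1 * Δx ^ 2 + (1 : ℝ) * a1 * xi * Δx + (1 : ℝ) * a0 * Δx = Δx * ubp := by
    rw [← havgp, avg_eq_s16 (xi + Δx) Δx q0 a0 a1 a2 a3 a4 a5 heval]
    unfold Fpoly
    field_simp
    ring
  have h4 : ((731 : ℝ)/1344) * a5 * Δx ^ 7 + ((-23 : ℝ)/12) * a5 * xi * Δx ^ 6 + ((21 : ℝ)/8) * a5 * xi ^ 2 * Δx ^ 5 + ((-5 : ℝ)/3) * a5 * xi ^ 3 * Δx ^ 4 + ((5 : ℝ)/12) * a5 * xi ^ 4 * Δx ^ 3 + ((-23 : ℝ)/60) * a4 * Δx ^ 6 + ((21 : ℝ)/20) * a4 * xi * Δx ^ 5 + (-1 : ℝ) * a4 * xi ^ 2 * Δx ^ 4 + ((1 : ℝ)/3) * a4 * xi ^ 3 * Δx ^ 3 + ((21 : ℝ)/80) * a3 * Δx ^ 5 + ((-1 : ℝ)/2) * a3 * xi * Δx ^ 4 + ((1 : ℝ)/4) * a3 * xi ^ 2 * Δx ^ 3 + ((-1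 : ℝ)/6) * a2 * Δx ^ 4 + ((1 : ℝ)/6) * a2 * xi * Δx ^ 3 + ((1 : ℝ)/12) * a1 * Δx ^ 3 = Δx^2 * vbm := by
    rw [← hmomm, mom_eq_s16 (xi - Δx) Δx q0 a0 a1 a2 a3 a4 a5 heval]
    unfold Fpoly
    field_simp
    ring
  have h5 : ((1 : ℝ)/448) * a5 * Δx ^ 7 + ((1 : ℝ)/8) * a5 * xi ^ 2 * Δx ^ 5 + ((5 : ℝ)/12) * a5 * xi ^ 4 * Δx ^ 3 + ((1 : ℝ)/20) * a4 * xi * Δx ^ 5 + ((1 : ℝ)/3) * a4 * xi ^ 3 * Δx ^ 3 + ((1 : ℝ)/80) * a3 * Δx ^ 5 + ((1 : ℝ)/4) * a3 * xi ^ 2 * Δx ^ 3 + ((1 : ℝ)/6) * a2 * xi * Δx ^ 3 + ((1 : ℝ)/12) * a1 * Δx ^ 3 = Δx^2 * vb := by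
    rw [← hmom, mom_eq_s16 xi Δx q0 a0 a1 a2 a3 a4 a5 heval]
    unfold Fpoly
    field_simp
    ring
  have h6 : ((731 : ℝ)/1344) * a5 * Δx ^ 7 + ((23 : ℝ)/12) * a5 * xi * Δx ^ 6 + ((21 : ℝ)/8) * a5 * xi ^ 2 * Δx ^ 5 + ((5 : ℝ)/3) * a5 * xi ^ 3 * Δx ^ 4 + ((5 : ℝ)/12) * a5 * xi ^ 4 * Δx ^ 3 + ((23 : ℝ)/60) * a4 * Δx ^ 6 + ((21 : ℝ)/20) * a4 * xi * Δx ^ 5 + (1 : ℝ) * a4 * xi ^ 2 * Δx ^ 4 + ((1 : ℝ)/3) * a4 * xi ^ 3 * Δx ^ 3 + ((21 : ℝ)/80) * a3 * Δx ^ 5 + ((1 : ℝ)/2) * a3 * xi * Δx ^ 4 + ((1 : ℝ)/4) * a3 * xi ^ 2 * Δx ^ 3 + ((1 : ℝ)/6) * a2 * Δx ^ 4 + ((1 : ℝ)/6) * a2 * xi * Δx ^ 3 + ((1 : ℝ)/12) * a1 * Δx ^ 3 = Δx^2 * vbp := by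
    rw [← hmomp, mom_eq_s16 (xi + Δx) Δx q0 a0 a1 a2 a3 a4 a5 heval]
    unfold Fpoly
    field_simp
    ring
  have key : Δx^2 * (q0.eval (xi + (Real.sqrt 5 / 10) * Δx)) =
      Δx^2 * (((101 / 5400) * Real.sqrt 5 - 1 / 24) * ubm + (13 / 12) * ub
        - ((101 / 5400) * Real.sqrt 5 + 1 / 24) * ubp
        + ((841 / 13500) * Real.sqrt 5 - 3 / 20) * vbm
        + (10289 / 6750) * Real.sqrt 5 * vb
        + (3 / 20 + (841 / 13500) * Real.sqrt 5) * vbp) := by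
    rw [heval]
    linear_combination (((-1 : ℝ)/24) * Δx + ((101 : ℝ)/5400) * Δx * (Real.sqrt 5)) * h1 + (((13 : ℝ)/12) * Δx) * h2 + (((-1 : ℝ)/24) * Δx + ((-101 : ℝ)/5400) * Δx * (Real.sqrt 5)) * h3
      + (((-3 : ℝ)/20) + ((841 : ℝ)/13500) * (Real.sqrt 5)) * h4 + (((10289 : ℝ)/6750) * (Real.sqrt 5)) * h5 + (((3 : ℝ)/20) + ((841 : ℝ)/13500) * (Real.sqrt 5)) * h6
      + (((1 : ℝ)/20000) * a5 * Δx ^ 7 * (Real.sqrt 5) + ((1 : ℝ)/100000) * a5 * Δx ^ 7 * (Real.sqrt 5) ^ 3 + ((1 : ℝ)/400) * a5 * xi * Δx ^ 6 + ((1 : ℝ)/2000) * a5 * xi * Δx ^ 6 * (Real.sqrt 5) ^ 2 + ((1 : ℝ)/100) * a5 * xi ^ 2 * Δx ^ 5 * (Real.sqrt 5) + ((1 : ℝ)/10) * a5 * xi ^ 3 * Δx ^ 4 + ((1 : ℝ)/2000) * a4 * Δx ^ 6 + ((1 : ℝ)/10000) * a4 * Δx ^ 6 * (Real.sqrt 5)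 ^ 2 + ((1 : ℝ)/250) * a4 * xi * Δx ^ 5 * (Real.sqrt 5) + ((3 : ℝ)/50) * a4 * xi ^ 2 * Δx ^ 4 + ((1 : ℝ)/1000) * a3 * Δx ^ 5 * (Real.sqrt 5) + ((3 : ℝ)/100) * a3 * xi * Δx ^ 4 + ((1 : ℝ)/100) * a2 * Δx ^ 4) * hs
  exact mul_left_cancel₀ (pow_ne_zero 2 hne) key
end
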